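/- arXiv:1509.06265 — 12 statements merged into one kernel-verified Lean document; each statement's English description precedes it below -/
import Mathlib

section
/- Let x be a real number represented by (m,n,p) with p ≥ 1. Then x ≠ 0 and 1/x is represented by (n,m,p-1); that is, |1/x - n/m| < |n/m| * (1/2^(p-1)). -/
/-!
If `x` lies within relative error `ε ≤ 1/2` of `r`, then `|x| > |r| / 2`, so
`|x⁻¹ - r⁻¹| = |x - r| / (|x| |r|) < ε / |x| < 2ε / |r|`: inversion at most doubles the relative
error, i.e. costs one bit of precision.
-/

theorem ne_zero_of_abs_sub_lt_abs {α : Type*} [AddGroup α] [LinearOrder α] {x r : α}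
    (h : |x - r| < |r|) : x ≠ 0 := by
  rintro rfl
  simp at h

theorem abs_inv_sub_inv_lt_of_abs_sub_lt_mul {α : Type*} [Field α] [LinearOrder α]
    [IsStrictOrderedRing α] {x r ε : α} (hε : ε ≤ 1 / 2)
    (h : |x - r| < |r| * ε) : |x⁻¹ - r⁻¹| < |r⁻¹| * (2 * ε) := by
  have hrε : 0 < |r| * ε := (abs_nonneg _).trans_lt h
  have hr : 0 < |r| := (abs_nonneg r).lt_of_ne fun h0 => by simp [← h0] at hrε
  have hε0 : 0 < ε := pos_of_mul_pos_right hrε hr.le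
  have hx : |r| / 2 < |x| := by
    have := abs_sub_abs_le_abs_sub r x
    rw [abs_sub_comm] at this
    nlinarith
  have hx0 : x ≠ 0 := abs_pos.mp (by linarith)
  calc |x⁻¹ - r⁻¹| = |x - r| / (|x| * |r|) := by
        rw [inv_sub_inv hx0 (abs_pos.mp hr), abs_div, abs_mul, abs_sub_comm]
    _ < |r| * ε / (|x| * |r|) := by gcongr
    _ = ε / |x| := by field_simp
    _ < ε / (|r| / 2) := by gcongr
    _ = |r⁻¹| * (2 * ε) := by rw [abs_inv]; field_simp

theorem inv_represented_general (x : ℝ) (m n : ℤ) (p : ℕ) (hp : 1 ≤ p)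
    (hx : |x - (m : ℝ) / (n : ℝ)| < |(m : ℝ) / (n : ℝ)| * (1 / 2 ^ p)) :
    x ≠ 0 ∧
      |1 / x - (n : ℝ) / (m : ℝ)| < |(n : ℝ) / (m : ℝ)| * (1 / 2 ^ (p - 1)) := by
  have hdouble : 2 * (1 / (2 : ℝ) ^ p) = 1 / 2 ^ (p - 1) := by
    rw [show p = p - 1 + 1 by omega, pow_succ', Nat.add_sub_cancel]; field_simp
  have hε : (1 : ℝ) / 2 ^ p ≤ 1 / 2 := by
    gcongr
    exact le_self_pow₀ one_le_two (by omega)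
  refine ⟨ne_zero_of_abs_sub_lt_abs (hx.trans_le (mul_le_of_le_one_right (abs_nonneg _) ?_)), ?_⟩
  · linarith
  · have h := abs_inv_sub_inv_lt_of_abs_sub_lt_mul hε hx
    rwa [inv_div, hdouble, ← one_div] at h

/-- If `x` is represented by `(m, n, p)` with `p ≥ 1`, then `x ≠ 0` and
`1 / x` is represented by `(n, m, p - 1)`. -/
theorem inv_represented (x : ℝ) (m n : ℤ) (p : ℕ) (hm : m ≠ 0) (hn : n ≠ 0) (hp : 1 ≤ p)
    (hx : |x - (m : ℝ) / (n : ℝ)| < |(m : ℝ) / (n : ℝ)| * (1 / 2 ^ p)) :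
    x ≠ 0 ∧
      |1 / x - (n : ℝ) / (m : ℝ)| < |(n : ℝ) / (m : ℝ)| * (1 / 2 ^ (p - 1)) :=
  inv_represented_general x m n p hp hx
end

section
/- Let x and y be real numbers represented by (m,n,p) and (m',n',p) respectively, and suppose the rational approximations have the same sign, i.e. (m/n)·(m'/n') > 0. Then x + y is represented by (m·n' + m'·n, n·n', p); that is, |(x+y) - (m·n' + m'·n)/(n·n')| < |(m·n' + m'·n)/(n·n')| * (1/2^p). -/
theorem abs_add_eq_add_abs_of_mul_nonneg {R : Type*} [Ring R] [LinearOrder R]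
    [IsStrictOrderedRing R] {a b : R} (hab : 0 ≤ a * b) : |a + b| = |a| + |b| :=
  (abs_add_eq_add_abs_iff a b).mpr (mul_nonneg_iff.mp hab)

theorem abs_add_sub_add_lt_of_mul_nonneg {R : Type*} [Ring R] [LinearOrder R]
    [IsStrictOrderedRing R] {x y a b ε : R} (hab : 0 ≤ a * b)
    (hx : |x - a| < |a| * ε) (hy : |y - b| < |b| * ε) :
    |x + y - (a + b)| < |a + b| * ε :=
  calc |x + y - (a + b)| = |(x - a) + (y - b)| := by rw [add_sub_add_comm]
    _ ≤ |x - a| + |y - b| := abs_add_le _ _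
    _ < |a| * ε + |b| * ε := add_lt_add hx hy
    _ = |a + b| * ε := by rw [abs_add_eq_add_abs_of_mul_nonneg hab, add_mul]

theorem add_represented_same_sign_general (x y : ℝ) (m n m' n' : ℤ) (p : ℕ)
    (hsign : ((m : ℝ) / (n : ℝ)) * ((m' : ℝ) / (n' : ℝ)) > 0)
    (hx : |x - (m : ℝ) / (n : ℝ)| < |(m : ℝ) / (n : ℝ)| * (1 / 2 ^ p))
    (hy : |y - (m' : ℝ) / (n' : ℝ)| < |(m' : ℝ) / (n' : ℝ)| * (1 / 2 ^ p)) :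
    |(x + y) - ((m * n' + m' * n : ℤ) : ℝ) / ((n * n' : ℤ) : ℝ)| <
      |((m * n' + m' * n : ℤ) : ℝ) / ((n * n' : ℤ) : ℝ)| * (1 / 2 ^ p) := by
  obtain ⟨hmn, hm'n'⟩ := mul_ne_zero_iff.mp hsign.ne'
  have hsum : ((m * n' + m' * n : ℤ) : ℝ) / ((n * n' : ℤ) : ℝ) = m / n + m' / n' := by
    push_cast
    rw [div_add_div _ _ (div_ne_zero_iff.mp hmn).2 (div_ne_zero_iff.mp hm'n').2]
    ring
  rw [hsum]
  exact abs_add_sub_add_lt_of_mul_nonneg hsign.le hx hy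

/-- If `x` and `y` are represented by `(m, n, p)` and `(m', n', p)` and the rational
approximations have the same sign, then `x + y` is represented by
`(m * n' + m' * n, n * n', p)`. -/
theorem add_represented_same_sign (x y : ℝ) (m n m' n' : ℤ) (p : ℕ)
    (hm : m ≠ 0) (hn : n ≠ 0) (hm' : m' ≠ 0) (hn' : n' ≠ 0)
    (hsign : ((m : ℝ) / (n : ℝ)) * ((m' : ℝ) / (n' : ℝ)) > 0)
    (hx : |x - (m : ℝ) / (n : ℝ)| < |(m : ℝ) / (n : ℝ)| * (1 / 2 ^ p))
    (hy : |y - (m' : ℝ) / (n' : ℝ)| < |(m' : ℝ) / (n' : ℝ)| * (1 / 2 ^ p)) :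
    |(x + y) - ((m * n' + m' * n : ℤ) : ℝ) / ((n * n' : ℤ) : ℝ)| <
      |((m * n' + m' * n : ℤ) : ℝ) / ((n * n' : ℤ) : ℝ)| * (1 / 2 ^ p) :=
  add_represented_same_sign_general x y m n m' n' p hsign hx hy
end

section
/- Let x and y be real numbers represented by (m,n,p) and (m',n',p) respectively, and suppose the rational approximations have opposite signs, i.e. (m/n)·(m'/n') < 0, and |m/n| ≠ |m'/n'|. Let r = min(|m/n|, |m'/n'|) / max(|m/n|, |m'/n'|), and let i be a natural number with p ≥ i and 2^i ≥ (1 + r)/(1 - r). Then x + y is represented by (m·n' + m'·n, n·n', p-i); that is, |(x+y) - (m·n' + m'·n)/(n·n')| < |(m·n' + m'·n)/(n·n')| * (1/2^(p-i)). -/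
/-!
Write `a = m/n`, `b = m'/n'`, `M = max |a| |b|` and `s = min |a| |b|`. The errors add up to
less than `(|a| + |b|) / 2^p = (M + s) / 2^p`, while opposite signs give `|a + b| = M - s`.
The hypothesis on `i` says exactly `M + s ≤ 2^i (M - s)`, i.e. cancellation costs at most
`i` bits of relative precision.
-/

theorem abs_add_sub_add_lt {α : Type*} [AddCommGroup α] [LinearOrder α] [IsOrderedAddMonoid α]
    {x y a b ε δ : α} (hx : |x - a| < ε) (hy : |y - b| < δ) :
    |x + y - (a + b)| < ε + δ :=
  calc |x + y - (a + b)| = |(x - a) + (y - b)| := by rw [add_sub_add_comm]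
    _ ≤ |x - a| + |y - b| := abs_add_le _ _
    _ < ε + δ := add_lt_add hx hy

theorem abs_add_eq_max_sub_min_of_mul_neg {α : Type*} [Ring α] [LinearOrder α]
    [IsStrictOrderedRing α] {a b : α} (h : a * b < 0) :
    |a + b| = max |a| |b| - min |a| |b| := by
  rw [max_sub_min_eq_abs]
  rcases mul_neg_iff.mp h with ⟨ha, hb⟩ | ⟨ha, hb⟩
  · rw [abs_of_pos ha, abs_of_neg hb, abs_sub_comm, sub_neg_eq_add]
  · rw [abs_of_neg ha, abs_of_pos hb, sub_neg_eq_add, add_comm]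

section LinearOrderedField

variable {α : Type*} [Field α] [LinearOrder α] [IsStrictOrderedRing α]

theorem add_le_mul_sub_of_one_add_div_le {s M c : α} (hsM : s < M) (hM : 0 < M)
    (hc : (1 + s / M) / (1 - s / M) ≤ c) : M + s ≤ c * (M - s) := by
  have hratio : (1 + s / M) / (1 - s / M) = (M + s) / (M - s) := by
    field_simp
  rwa [hratio, div_le_iff₀ (sub_pos.mpr hsM)] at hc

theorem div_two_pow_le_div_two_pow_sub {u v : α} {p i : ℕ} (hip : i ≤ p) (h : u ≤ 2 ^ i * v) :
    u / 2 ^ p ≤ v / 2 ^ (p - i) := by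
  obtain ⟨k, rfl⟩ := Nat.exists_eq_add_of_le hip
  rw [Nat.add_sub_cancel_left, pow_add, ← div_div, div_le_div_iff_of_pos_right (by positivity)]
  rwa [div_le_iff₀ (by positivity), mul_comm]

end LinearOrderedField

theorem add_represented_opposite_sign_general (x y : ℝ) (m n m' n' : ℤ) (p i : ℕ)
    (hn : n ≠ 0) (hn' : n' ≠ 0)
    (hsign : ((m : ℝ) / (n : ℝ)) * ((m' : ℝ) / (n' : ℝ)) < 0)
    (habs : |(m : ℝ) / (n : ℝ)| ≠ |(m' : ℝ) / (n' : ℝ)|)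
    (hip : i ≤ p)
    (hi : (2 : ℝ) ^ i ≥
      (1 + min |(m : ℝ) / (n : ℝ)| |(m' : ℝ) / (n' : ℝ)| /
            max |(m : ℝ) / (n : ℝ)| |(m' : ℝ) / (n' : ℝ)|) /
      (1 - min |(m : ℝ) / (n : ℝ)| |(m' : ℝ) / (n' : ℝ)| /
            max |(m : ℝ) / (n : ℝ)| |(m' : ℝ) / (n' : ℝ)|))
    (hx : |x - (m : ℝ) / (n : ℝ)| < |(m : ℝ) / (n : ℝ)| * (1 / 2 ^ p))
    (hy : |y - (m' : ℝ) / (n' : ℝ)| < |(m' : ℝ) / (n' : ℝ)| * (1 / 2 ^ p)) :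
    |(x + y) - ((m * n' + m' * n : ℤ) : ℝ) / ((n * n' : ℤ) : ℝ)| <
      |((m * n' + m' * n : ℤ) : ℝ) / ((n * n' : ℤ) : ℝ)| * (1 / 2 ^ (p - i)) := by
  have hsum : ((m * n' + m' * n : ℤ) : ℝ) / ((n * n' : ℤ) : ℝ) = m / n + m' / n' := by
    push_cast
    rw [div_add_div _ _ (Int.cast_ne_zero.mpr hn) (Int.cast_ne_zero.mpr hn'), mul_comm (m' : ℝ)]
  rw [hsum]
  set a := (m : ℝ) / n
  set b := (m' : ℝ) / n'
  have hsM : min |a| |b| < max |a| |b| := min_lt_max.mpr habs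
  have hM : 0 < max |a| |b| := (le_min (abs_nonneg a) (abs_nonneg b)).trans_lt hsM
  have hcancel := add_le_mul_sub_of_one_add_div_le hsM hM hi
  calc |x + y - (a + b)| < |a| * (1 / 2 ^ p) + |b| * (1 / 2 ^ p) := abs_add_sub_add_lt hx hy
    _ = (max |a| |b| + min |a| |b|) / 2 ^ p := by rw [max_add_min]; ring
    _ ≤ (max |a| |b| - min |a| |b|) / 2 ^ (p - i) := div_two_pow_le_div_two_pow_sub hip hcancel
    _ = |a + b| * (1 / 2 ^ (p - i)) := by rw [abs_add_eq_max_sub_min_of_mul_neg hsign]; ring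

/-- If `x` and `y` are represented by `(m, n, p)` and `(m', n', p)`, the rational
approximations have opposite signs and distinct absolute values, and `i ≤ p` is a
natural number with `2 ^ i ≥ (1 + r) / (1 - r)` where
`r = min |m/n| |m'/n'| / max |m/n| |m'/n'|`, then `x + y` is represented by
`(m * n' + m' * n, n * n', p - i)`. -/
theorem add_represented_opposite_sign (x y : ℝ) (m n m' n' : ℤ) (p i : ℕ)
    (hm : m ≠ 0) (hn : n ≠ 0) (hm' : m' ≠ 0) (hn' : n' ≠ 0)
    (hsign : ((m : ℝ) / (n : ℝ)) * ((m' : ℝ) / (n' : ℝ)) < 0)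
    (habs : |(m : ℝ) / (n : ℝ)| ≠ |(m' : ℝ) / (n' : ℝ)|)
    (hip : i ≤ p)
    (hi : (2 : ℝ) ^ i ≥
      (1 + min |(m : ℝ) / (n : ℝ)| |(m' : ℝ) / (n' : ℝ)| /
            max |(m : ℝ) / (n : ℝ)| |(m' : ℝ) / (n' : ℝ)|) /
      (1 - min |(m : ℝ) / (n : ℝ)| |(m' : ℝ) / (n' : ℝ)| /
            max |(m : ℝ) / (n : ℝ)| |(m' : ℝ) / (n' : ℝ)|))
    (hx : |x - (m : ℝ) / (n : ℝ)| < |(m : ℝ) / (n : ℝ)| * (1 / 2 ^ p))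
    (hy : |y - (m' : ℝ) / (n' : ℝ)| < |(m' : ℝ) / (n' : ℝ)| * (1 / 2 ^ p)) :
    |(x + y) - ((m * n' + m' * n : ℤ) : ℝ) / ((n * n' : ℤ) : ℝ)| <
      |((m * n' + m' * n : ℤ) : ℝ) / ((n * n' : ℤ) : ℝ)| * (1 / 2 ^ (p - i)) :=
  add_represented_opposite_sign_general x y m n m' n' p i hn hn' hsign habs hip hi hx hy
end

section
/- Let x be a real number represented by (m,n,p) with m/n > 0, and let a be an integer such that 2^(a-1) ≤ m/n < 2^a. Let N = ⌈log₂(log₂(2^(p+3)+1))⌉ + 1, assume p ≥ 4N, and define the Newton–Raphson sequence y₀ = 2^(⌈a/2⌉+1), y_{k+1} = (y_k² + m/n)/(2·y_k). Then √x is represented by the N-th term of this sequence with precision p - 4N; that is, |√x - y_N| < |y_N| * (1/2^(p-4N)). -/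
/-!
Writing `s = √(m/n)`, a Newton step from `t > 0` satisfies `t' - s = (t - s) ^ 2 / (2 t)`, so
every iterate after the first is `≥ s`, and a relative error `e` is replaced by
`e ^ 2 / (2 (1 + e)) ≤ e ^ 2 / 2`. The choice `y₀ = 2 ^ (⌈a/2⌉ + 1)` gives `s ≤ y₀ ≤ 4 s`, so the
relative error goes `3 → 9/8 → 81/272 < 1/2` and from then on is squared at each step:
`e_{j+2} ≤ 2 / 2 ^ 2 ^ (j + 1)`. The definition of `N` makes `2 ^ (N - 1) > p + 3`, hence
`y_N - s ≤ s / 2 ^ p`, while `|√x - s| · s ≤ |x - m/n| < s ^ 2 / 2 ^ p`. Together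
`|√x - y_N| < 2 y_N / 2 ^ p`, and the factor `2` is absorbed by the lost precision `4 N`.
-/

open Real

lemma abs_sqrt_sub_sqrt_mul_sqrt_le (x : ℝ) {r : ℝ} (hr : 0 ≤ r) :
    |√x - √r| * √r ≤ |x - r| := by
  rcases le_or_gt 0 x with hx | hx
  · have key : |√x - √r| * (√x + √r) = |x - r| := by
      rw [← abs_of_nonneg (add_nonneg (sqrt_nonneg x) (sqrt_nonneg r)), ← abs_mul]
      congr 1
      linear_combination sq_sqrt hx - sq_sqrt hr
    rw [← key]
    exact mul_le_mul_of_nonneg_left (by linarith [sqrt_nonneg x]) (abs_nonneg _)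
  · rw [sqrt_eq_zero_of_nonpos hx.le, zero_sub, abs_neg, abs_of_nonneg (sqrt_nonneg r),
      mul_self_sqrt hr, abs_of_neg (by linarith)]
    linarith

lemma abs_sqrt_sub_sqrt_lt {x r ε : ℝ} (hr : 0 < r) (hx : |x - r| < r * ε) :
    |√x - √r| < √r * ε := by
  refine lt_of_mul_lt_mul_right ?_ (sqrt_nonneg r)
  calc |√x - √r| * √r ≤ |x - r| := abs_sqrt_sub_sqrt_mul_sqrt_le x hr.le
    _ < r * ε := hx
    _ = √r * ε * √r := by rw [mul_right_comm, mul_self_sqrt hr.le]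

lemma le_two_pow_ceil_logb {L : ℝ} (hL : 0 < L) : L ≤ 2 ^ ⌈logb 2 L⌉₊ := by
  calc L = 2 ^ logb 2 L := (rpow_logb two_pos (by norm_num) hL).symm
    _ ≤ 2 ^ (⌈logb 2 L⌉₊ : ℝ) := rpow_le_rpow_of_exponent_le one_le_two (Nat.le_ceil _)
    _ = 2 ^ ⌈logb 2 L⌉₊ := rpow_natCast 2 _

lemma lt_two_pow_ceil_logb_logb (q : ℕ) : q < 2 ^ ⌈logb 2 (logb 2 (2 ^ q + 1))⌉₊ := by
  have hq : (q : ℝ) < logb 2 (2 ^ q + 1) := by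
    rw [lt_logb_iff_rpow_lt one_lt_two (by positivity), rpow_natCast]
    linarith
  exact_mod_cast hq.trans_le (le_two_pow_ceil_logb (hq.trans_le' q.cast_nonneg))

lemma le_two_mul_ceil_half (a : ℤ) : a ≤ 2 * ⌈(a : ℝ) / 2⌉ := by
  have h : (a : ℝ) ≤ 2 * ⌈(a : ℝ) / 2⌉ := by linarith [Int.le_ceil ((a : ℝ) / 2)]
  exact_mod_cast h

lemma two_mul_ceil_half_le (a : ℤ) : 2 * ⌈(a : ℝ) / 2⌉ ≤ a + 1 := by
  have h : (2 * ⌈(a : ℝ) / 2⌉ : ℝ) < a + 2 := by linarith [Int.ceil_lt_add_one ((a : ℝ) / 2)]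
  have h' : 2 * ⌈(a : ℝ) / 2⌉ < a + 2 := by exact_mod_cast h
  omega

lemma two_zpow_sq (k : ℤ) : ((2 : ℝ) ^ k) ^ 2 = 2 ^ (2 * k) := by
  rw [← zpow_natCast, ← zpow_mul, mul_comm]
  norm_num

lemma sqrt_le_two_zpow_ceil_half_add_one {r : ℝ} {a : ℤ} (ha : r < 2 ^ a) :
    √r ≤ (2 : ℝ) ^ (⌈(a : ℝ) / 2⌉ + 1) := by
  rw [sqrt_le_left (by positivity), two_zpow_sq]
  refine ha.le.trans (zpow_le_zpow_right₀ one_le_two ?_)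
  linarith [le_two_mul_ceil_half a]

lemma two_zpow_ceil_half_add_one_le_four_mul_sqrt {r : ℝ} {a : ℤ} (ha : 2 ^ (a - 1) ≤ r) :
    (2 : ℝ) ^ (⌈(a : ℝ) / 2⌉ + 1) ≤ 4 * √r := by
  have hsq : (2 : ℝ) ^ (⌈(a : ℝ) / 2⌉ - 1) ≤ √r := by
    refine le_sqrt_of_sq_le ?_
    rw [two_zpow_sq]
    refine le_trans (zpow_le_zpow_right₀ one_le_two ?_) ha
    linarith [two_mul_ceil_half_le a]
  rw [show ⌈(a : ℝ) / 2⌉ + 1 = 2 + (⌈(a : ℝ) / 2⌉ - 1) by ring, zpow_add₀ two_ne_zero]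
  norm_num [hsq]

lemma newton_step_sub_sqrt {r t : ℝ} (hr : 0 ≤ r) (ht : t ≠ 0) :
    (t ^ 2 + r) / (2 * t) - √r = (t - √r) ^ 2 / (2 * t) := by
  nth_rw 1 [← sq_sqrt hr]
  field_simp
  ring

lemma sqrt_le_newton_step {r t : ℝ} (hr : 0 ≤ r) (ht : 0 < t) :
    √r ≤ (t ^ 2 + r) / (2 * t) := by
  have h := newton_step_sub_sqrt hr ht.ne'
  have : 0 ≤ (t - √r) ^ 2 / (2 * t) := by positivity
  linarith

lemma newton_step_sub_sqrt_le {r t e : ℝ} (hr : 0 < r) (ht : √r ≤ t) (he : t - √r ≤ e * √r) :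
    (t ^ 2 + r) / (2 * t) - √r ≤ e ^ 2 / (2 * (1 + e)) * √r := by
  have hs : 0 < √r := sqrt_pos.2 hr
  have hd : 0 ≤ t - √r := sub_nonneg.2 ht
  have he0 : 0 ≤ e := nonneg_of_mul_nonneg_left (hd.trans he) hs
  rw [newton_step_sub_sqrt hr.le (by linarith), div_mul_eq_mul_div,
    div_le_div_iff₀ (by linarith) (by positivity)]
  nlinarith [mul_le_mul he he hd (by positivity), mul_le_mul_of_nonneg_left he (mul_nonneg he0 hd)]

section NewtonSequence

variable {r : ℝ} {y : ℕ → ℝ}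

lemma sqrt_le_newton_seq (hr : 0 < r) (hy : ∀ k, y (k + 1) = (y k ^ 2 + r) / (2 * y k))
    (h0 : √r ≤ y 0) (k : ℕ) : √r ≤ y k := by
  induction k with
  | zero => exact h0
  | succ k ih => rw [hy]; exact sqrt_le_newton_step hr.le (ih.trans_lt' (sqrt_pos.2 hr))

lemma newton_seq_two_sub_sqrt_le (hr : 0 < r)
    (hy : ∀ k, y (k + 1) = (y k ^ 2 + r) / (2 * y k)) (h0 : √r ≤ y 0) (h0' : y 0 ≤ 4 * √r) :
    y 2 - √r ≤ √r / 2 := by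
  have h1 : y 1 - √r ≤ 9 / 8 * √r := by
    have h := newton_step_sub_sqrt_le (e := 3) hr h0 (by linarith)
    rw [← hy] at h
    norm_num at h
    linarith
  have h2 := newton_step_sub_sqrt_le hr (sqrt_le_newton_seq hr hy h0 1) h1
  rw [← hy] at h2
  norm_num at h2
  linarith [sqrt_pos.2 hr]

lemma newton_seq_sub_sqrt_le (hr : 0 < r) (hy : ∀ k, y (k + 1) = (y k ^ 2 + r) / (2 * y k))
    (h0 : √r ≤ y 0) {k : ℕ} (hk : y k - √r ≤ √r / 2) (j : ℕ) :
    y (k + j) - √r ≤ 2 / 2 ^ 2 ^ (j + 1) * √r := by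
  induction j with
  | zero => norm_num; linarith
  | succ j ih =>
    set e : ℝ := 2 / 2 ^ 2 ^ (j + 1) with he
    have step := newton_step_sub_sqrt_le hr (sqrt_le_newton_seq hr hy h0 _) ih
    rw [← hy] at step
    refine step.trans (mul_le_mul_of_nonneg_right ?_ (sqrt_nonneg r))
    calc e ^ 2 / (2 * (1 + e)) ≤ e ^ 2 / 2 :=
          div_le_div_of_nonneg_left (sq_nonneg e) two_pos (by linarith [show 0 ≤ e by positivity])
      _ = 2 / 2 ^ 2 ^ (j + 1 + 1) := by
          rw [he, pow_succ 2 (j + 1), pow_mul]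
          field_simp

end NewtonSequence

theorem sqrt_newton_raphson_represented_general (x : ℝ) (m n : ℤ) (p : ℕ) (a : ℤ) (N : ℕ)
    (y : ℕ → ℝ)
    (hpos : 0 < (m : ℝ) / (n : ℝ))
    (ha₁ : (2 : ℝ) ^ (a - 1) ≤ (m : ℝ) / (n : ℝ))
    (ha₂ : (m : ℝ) / (n : ℝ) < (2 : ℝ) ^ a)
    (hN : N = ⌈Real.logb 2 (Real.logb 2 (2 ^ (p + 3) + 1))⌉₊ + 1)
    (hp : 4 * N ≤ p)
    (hy0 : y 0 = (2 : ℝ) ^ (⌈(a : ℝ) / 2⌉ + 1))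
    (hyrec : ∀ k, y (k + 1) = (y k ^ 2 + (m : ℝ) / (n : ℝ)) / (2 * y k))
    (hx : |x - (m : ℝ) / (n : ℝ)| < |(m : ℝ) / (n : ℝ)| * (1 / 2 ^ p)) :
    |Real.sqrt x - y N| < |y N| * (1 / 2 ^ (p - 4 * N)) := by
  set r : ℝ := (m : ℝ) / (n : ℝ)
  have h0 : √r ≤ y 0 := hy0 ▸ sqrt_le_two_zpow_ceil_half_add_one ha₂
  have h0' : y 0 ≤ 4 * √r := hy0 ▸ two_zpow_ceil_half_add_one_le_four_mul_sqrt ha₁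
  obtain ⟨D, hD, rfl⟩ : ∃ D, p + 3 < 2 ^ D ∧ N = D + 1 :=
    ⟨_, lt_two_pow_ceil_logb_logb (p + 3), hN⟩
  obtain ⟨j, rfl⟩ : ∃ j, D = j + 1 := Nat.exists_eq_succ_of_ne_zero (by rintro rfl; omega)
  have hyN : y (j + 2) - √r ≤ √r * (1 / 2 ^ p) := by
    have h := newton_seq_sub_sqrt_le hpos hyrec h0 (newton_seq_two_sub_sqrt_le hpos hyrec h0 h0') j
    rw [add_comm] at h
    refine h.trans (le_of_eq_of_le (mul_comm _ _) (mul_le_mul_of_nonneg_left ?_ (sqrt_nonneg r)))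
    rw [div_le_div_iff₀ (by positivity) (by positivity), one_mul, ← pow_succ']
    exact pow_le_pow_right₀ one_le_two (by omega)
  have hsqrt : |√x - √r| < √r * (1 / 2 ^ p) :=
    abs_sqrt_sub_sqrt_lt hpos (by rwa [abs_of_pos hpos] at hx)
  have hsyN : √r ≤ y (j + 2) := sqrt_le_newton_seq hpos hyrec h0 _
  have hprec : 2 * (1 / (2 : ℝ) ^ p) ≤ 1 / 2 ^ (p - 4 * (j + 1 + 1)) := by
    rw [mul_one_div, div_le_div_iff₀ (by positivity) (by positivity), one_mul, ← pow_succ']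
    exact pow_le_pow_right₀ one_le_two (by omega)
  calc |√x - y (j + 2)| ≤ |√x - √r| + (y (j + 2) - √r) := by
        simpa [abs_sub_comm, abs_of_nonneg (sub_nonneg.2 hsyN)] using abs_sub_le (√x) (√r) (y (j + 2))
    _ < y (j + 2) * (2 * (1 / 2 ^ p)) := by nlinarith [show (0 : ℝ) < 1 / 2 ^ p by positivity]
    _ ≤ |y (j + 2)| * (1 / 2 ^ (p - 4 * (j + 1 + 1))) := by
        rw [abs_of_pos (hsyN.trans_lt' (sqrt_pos.2 hpos))]
        exact mul_le_mul_of_nonneg_left hprec (hsyN.trans' (sqrt_nonneg r))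

/-- Newton–Raphson approximation of `√x`: if `x` is represented by `(m, n, p)` with
`m/n > 0`, `2 ^ (a - 1) ≤ m/n < 2 ^ a`, `N = ⌈log₂ (log₂ (2 ^ (p + 3) + 1))⌉ + 1`,
`p ≥ 4 N`, and `y` is the Newton–Raphson sequence with `y 0 = 2 ^ (⌈a / 2⌉ + 1)` and
`y (k + 1) = (y k ^ 2 + m / n) / (2 * y k)`, then `√x` is represented by `y N` with
precision `p - 4 N`. -/
theorem sqrt_newton_raphson_represented (x : ℝ) (m n : ℤ) (p : ℕ) (a : ℤ) (N : ℕ)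
    (y : ℕ → ℝ) (hm : m ≠ 0) (hn : n ≠ 0)
    (hpos : 0 < (m : ℝ) / (n : ℝ))
    (ha₁ : (2 : ℝ) ^ (a - 1) ≤ (m : ℝ) / (n : ℝ))
    (ha₂ : (m : ℝ) / (n : ℝ) < (2 : ℝ) ^ a)
    (hN : N = ⌈Real.logb 2 (Real.logb 2 (2 ^ (p + 3) + 1))⌉₊ + 1)
    (hp : 4 * N ≤ p)
    (hy0 : y 0 = (2 : ℝ) ^ (⌈(a : ℝ) / 2⌉ + 1))
    (hyrec : ∀ k, y (k + 1) = (y k ^ 2 + (m : ℝ) / (n : ℝ)) / (2 * y k))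
    (hx : |x - (m : ℝ) / (n : ℝ)| < |(m : ℝ) / (n : ℝ)| * (1 / 2 ^ p)) :
    |Real.sqrt x - y N| < |y N| * (1 / 2 ^ (p - 4 * N)) :=
  sqrt_newton_raphson_represented_general x m n p a N y hpos ha₁ ha₂ hN hp hy0 hyrec hx
end

section
/- Let x be a real number represented by (m,n,p) with 0 < m/n < 1. Let N be an even natural number with N > 2^((p+11)/3), and assume p ≥ 2⌈log₂(N/2)⌉ + 3. Then exp(x) is approximated by A = (N/(N - 2m/n))^(N/2) with relative error less than 1/2^(p - 2⌈log₂(N/2)⌉ - 3); that is, |exp(x) - A| < |A| * (1/2^(p - 2⌈log₂(N/2)⌉ - 3)). -/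
/-!
Write `k = N / 2` and `μ = m / n`. The approximant is `(k / (k - μ)) ^ k = exp L` with
`L = k log (k / (k - μ))`, and `1 - 1/y ≤ log y ≤ y - 1` gives `|L - μ| ≤ μ² / (k - μ) ≤ 1 / (k - 1)`.
Hence `|x - L| < 2⁻ᵖ + 1 / (k - 1)` and `|exp x - exp L| ≤ 2 exp L |x - L|`. The hypothesis on `N`
says `2 ^ (p + 8) < k³`, so `1 / (k - 1)` is at most of order `k² / 2ᵖ`, and `k ≤ 2 ^ ⌈log₂ k⌉`
absorbs `8 k²` into the loss `2 ^ (2 ⌈log₂ k⌉ + 3)` of precision.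
-/

open Real

lemma abs_mul_log_div_sub_sub_le {a μ : ℝ} (hμ : 0 ≤ μ) (hμa : μ < a) :
    |a * log (a / (a - μ)) - μ| ≤ μ ^ 2 / (a - μ) := by
  have ha : 0 < a := hμ.trans_lt hμa
  have hsub : 0 < a - μ := sub_pos.mpr hμa
  have hlower : μ ≤ a * log (a / (a - μ)) := by
    have h := one_sub_inv_le_log_of_pos (div_pos ha hsub)
    rw [inv_div, one_sub_div ha.ne', sub_sub_cancel] at h
    rwa [div_le_iff₀' ha] at h
  have hupper : a * log (a / (a - μ)) ≤ μ + μ ^ 2 / (a - μ) := by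
    have h := log_le_sub_one_of_pos (div_pos ha hsub)
    rw [div_sub_one hsub.ne', sub_sub_cancel] at h
    calc a * log (a / (a - μ)) ≤ a * (μ / (a - μ)) := by gcongr
      _ = μ + μ ^ 2 / (a - μ) := by field_simp; ring
  rw [abs_le]
  constructor <;> nlinarith [div_nonneg (sq_nonneg μ) hsub.le]

lemma abs_exp_sub_exp_le {x y : ℝ} (h : |x - y| ≤ 1) :
    |exp x - exp y| ≤ exp y * (2 * |x - y|) := by
  have hxy : exp x - exp y = exp y * (exp (x - y) - 1) := by
    rw [mul_sub, ← exp_add, add_sub_cancel, mul_one]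
  rw [hxy, abs_mul, abs_of_pos (exp_pos y)]
  exact mul_le_mul_of_nonneg_left (abs_exp_sub_one_le h) (exp_pos y).le

lemma rpow_lt_pow_three_of_rpow_div_three_lt {x a y : ℝ} (hx : 0 ≤ x) (h : x ^ (a / 3) < y) :
    x ^ a < y ^ 3 := by
  calc x ^ a = (x ^ (a / 3)) ^ 3 := by
        rw [← rpow_natCast, ← rpow_mul hx]; norm_num
    _ < y ^ 3 := by gcongr

lemma two_mul_one_div_two_pow_add_one_div_sub_one_le {p k c : ℕ} (hk : 2 ≤ k) (hkc : k ≤ 2 ^ c)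
    (hcube : 2 ^ (p + 8) < k ^ 3) (hp : 2 * c + 3 ≤ p) :
    2 * (1 / 2 ^ p + 1 / ((k : ℝ) - 1)) ≤ 1 / 2 ^ (p - 2 * c - 3) := by
  have hsplit : (2 : ℝ) ^ p = 2 ^ (p - 2 * c - 3) * (8 * ((2 : ℝ) ^ c) ^ 2) := by
    rw [← pow_mul, show (8 : ℝ) = 2 ^ 3 by norm_num, ← pow_add, ← pow_add]
    congr 1; omega
  have hk' : (2 : ℝ) ≤ k := by exact_mod_cast hk
  have hkc' : (k : ℝ) ≤ 2 ^ c := by exact_mod_cast hkc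
  have hcube' : 256 * (2 : ℝ) ^ p < (k : ℝ) ^ 3 := by
    have : (2 : ℝ) ^ (p + 8) < (k : ℝ) ^ 3 := by exact_mod_cast hcube
    rw [pow_add] at this; linarith
  have hP : (0 : ℝ) < 2 ^ p := by positivity
  rw [show (1 : ℝ) / 2 ^ (p - 2 * c - 3) = 8 * ((2 : ℝ) ^ c) ^ 2 / 2 ^ p by
    rw [hsplit]; field_simp]
  calc 2 * (1 / 2 ^ p + 1 / ((k : ℝ) - 1)) ≤ 8 * (k : ℝ) ^ 2 / 2 ^ p := by
        rw [div_add_div _ _ hP.ne' (by linarith), ← mul_div_assoc, div_le_div_iff₀ (by nlinarith) hP]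
        nlinarith [mul_le_mul_of_nonneg_left hk' hP.le]
    _ ≤ 8 * ((2 : ℝ) ^ c) ^ 2 / 2 ^ p := by gcongr

lemma two_pow_add_eight_lt_pow_three {p k : ℕ}
    (hN : ((2 * k : ℕ) : ℝ) > (2 : ℝ) ^ (((p : ℝ) + 11) / 3)) : 2 ^ (p + 8) < k ^ 3 := by
  have h := rpow_lt_pow_three_of_rpow_div_three_lt zero_le_two hN
  rw [show (p : ℝ) + 11 = ((p + 11 : ℕ) : ℝ) by push_cast; ring, rpow_natCast] at h
  have h' : 2 ^ (p + 11) < (2 * k) ^ 3 := by exact_mod_cast h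
  rw [show 2 ^ (p + 11) = 8 * 2 ^ (p + 8) by ring, mul_pow] at h'
  norm_num at h'
  linarith

lemma div_sub_two_mul_pow_eq_exp {k : ℕ} {μ : ℝ} (hμ₀ : 0 ≤ μ) (hμ : μ < k) :
    ((2 * k : ℕ) / ((2 * k : ℕ) - 2 * μ)) ^ k = exp (k * log (k / (k - μ))) := by
  push_cast
  rw [← mul_sub, mul_div_mul_left _ _ two_ne_zero, exp_nat_mul,
    exp_log (div_pos (hμ₀.trans_lt hμ) (sub_pos.mpr hμ))]

theorem exp_represented_pos_base_general (x : ℝ) (m n : ℤ) (p N : ℕ)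
    (hx : |x - (m : ℝ) / (n : ℝ)| < |(m : ℝ) / (n : ℝ)| * (1 / 2 ^ p))
    (hmn₀ : 0 < (m : ℝ) / (n : ℝ)) (hmn₁ : (m : ℝ) / (n : ℝ) < 1)
    (hNeven : Even N)
    (hN : (N : ℝ) > (2 : ℝ) ^ (((p : ℝ) + 11) / 3))
    (hp : 2 * Nat.clog 2 (N / 2) + 3 ≤ p) :
    |Real.exp x - ((N : ℝ) / ((N : ℝ) - 2 * ((m : ℝ) / (n : ℝ)))) ^ (N / 2)| <
      |((N : ℝ) / ((N : ℝ) - 2 * ((m : ℝ) / (n : ℝ)))) ^ (N / 2)| *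
        (1 / 2 ^ (p - 2 * Nat.clog 2 (N / 2) - 3)) := by
  obtain ⟨k, rfl⟩ := hNeven.two_dvd
  set μ := (m : ℝ) / (n : ℝ)
  rw [Nat.mul_div_cancel_left k two_pos] at hp ⊢
  have hcube : 2 ^ (p + 8) < k ^ 3 := two_pow_add_eight_lt_pow_three hN
  have hk : 2 ≤ k := by
    by_contra!
    interval_cases k <;> simp at hcube
  have hk' : (2 : ℝ) ≤ k := by exact_mod_cast hk
  rw [div_sub_two_mul_pow_eq_exp hmn₀.le (by linarith), abs_of_pos (exp_pos _)]
  set L := (k : ℝ) * log (k / (k - μ))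
  have hxμ : |x - μ| < 1 / 2 ^ p :=
    hx.trans_le (mul_le_of_le_one_left (by positivity) (by rw [abs_of_pos hmn₀]; exact hmn₁.le))
  have hLμ : |L - μ| ≤ 1 / ((k : ℝ) - 1) := by
    calc |L - μ| ≤ μ ^ 2 / (k - μ) := abs_mul_log_div_sub_sub_le hmn₀.le (by linarith)
      _ ≤ 1 / ((k : ℝ) - 1) := by gcongr <;> nlinarith
  have hxL : 2 * |x - L| < 1 / 2 ^ (p - 2 * Nat.clog 2 k - 3) := by
    calc 2 * |x - L| ≤ 2 * (|x - μ| + |L - μ|) := by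
          rw [abs_sub_comm L μ]; gcongr; exact abs_sub_le x μ L
      _ < 2 * (1 / 2 ^ p + 1 / ((k : ℝ) - 1)) := by
          gcongr 2 * ?_; exact add_lt_add_of_lt_of_le hxμ hLμ
      _ ≤ 1 / 2 ^ (p - 2 * Nat.clog 2 k - 3) :=
        two_mul_one_div_two_pow_add_one_div_sub_one_le hk (Nat.le_pow_clog one_lt_two k) hcube hp
  have hxL_le_one : |x - L| ≤ 1 := by
    have : (1 : ℝ) / 2 ^ (p - 2 * Nat.clog 2 k - 3) ≤ 1 :=
      div_le_one_of_le₀ (one_le_pow₀ one_le_two) (by positivity)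
    linarith [abs_nonneg (x - L)]
  calc |exp x - exp L| ≤ exp L * (2 * |x - L|) := abs_exp_sub_exp_le hxL_le_one
    _ < exp L * (1 / 2 ^ (p - 2 * Nat.clog 2 k - 3)) := by gcongr

/-- Riemann-sum approximation of `exp x` in the base interval `0 < m/n < 1`:
if `x` is represented by `(m, n, p)`, `N` is even with `N > 2 ^ ((p + 11) / 3)`
(real power), and `p ≥ 2 ⌈log₂ (N / 2)⌉ + 3`, then
`A = (N / (N - 2 m / n)) ^ (N / 2)` approximates `exp x` with relative error less
than `1 / 2 ^ (p - 2 ⌈log₂ (N / 2)⌉ - 3)`. -/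
theorem exp_represented_pos_base (x : ℝ) (m n : ℤ) (p N : ℕ)
    (hm : m ≠ 0) (hn : n ≠ 0)
    (hx : |x - (m : ℝ) / (n : ℝ)| < |(m : ℝ) / (n : ℝ)| * (1 / 2 ^ p))
    (hmn₀ : 0 < (m : ℝ) / (n : ℝ)) (hmn₁ : (m : ℝ) / (n : ℝ) < 1)
    (hNeven : Even N)
    (hN : (N : ℝ) > (2 : ℝ) ^ (((p : ℝ) + 11) / 3))
    (hp : 2 * Nat.clog 2 (N / 2) + 3 ≤ p) :
    |Real.exp x - ((N : ℝ) / ((N : ℝ) - 2 * ((m : ℝ) / (n : ℝ)))) ^ (N / 2)| <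
      |((N : ℝ) / ((N : ℝ) - 2 * ((m : ℝ) / (n : ℝ)))) ^ (N / 2)| *
        (1 / 2 ^ (p - 2 * Nat.clog 2 (N / 2) - 3)) :=
  exp_represented_pos_base_general x m n p N hx hmn₀ hmn₁ hNeven hN hp
end

section
/- Let x be a real number represented by (m,n,p) with m/n ≥ 1. Let k ≥ 1 be a natural number such that m/(2^k · n) < 1, let N be an even natural number with N > 2^((p+11)/3), and assume p ≥ 2⌈log₂(N/2)⌉ + 2k + 3. Then exp(x) is approximated by A = (N/(N - 2m/(2^k · n)))^(N·2^(k-1)) with relative error less than 1/2^(p - 2⌈log₂(N/2)⌉ - 2k - 3); that is, |exp(x) - A| < |A| * (1/2^(p - 2⌈log₂(N/2)⌉ - 2k - 3)). -/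
/-!
Put `y = m / (2 ^ k n) ∈ (0, 1)` and `A = (N / (N - 2y)) ^ (N 2 ^ (k - 1))`. The bounds
`1 - 1/t ≤ log t ≤ t - 1` give `0 ≤ N log (N / (N - 2y)) - 2y ≤ 4y² / (N - 2y)`, so
`log A = 2 ^ (k - 1) N log (N / (N - 2y))` lies within `2 ^ (k + 1) / (N - 2)` of
`2 ^ k y = m / n`, which is itself within `2 ^ k / 2 ^ p` of `x`. Since
`N ≤ 2 ^ (⌈log₂ (N/2)⌉ + 1)` and `N³ > 2 ^ (p + 11)`, both errors are at most `ε / 4` for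
`ε = 2 ^ -(p - 2⌈log₂ (N/2)⌉ - 2k - 3)`, and `|exp t - 1| ≤ 2|t|` for `|t| ≤ 1` turns
`|x - log A| < ε / 2` into `|exp x - A| < A ε`.
-/

open Real

theorem abs_exp_sub_lt_of_abs_sub_log_lt {x A ε : ℝ} (hA : 0 < A) (hε : ε ≤ 2)
    (h : |x - log A| < ε / 2) : |exp x - A| < A * ε := by
  have hexp : exp x = A * exp (x - log A) := by rw [exp_sub, exp_log hA, mul_div_cancel₀ _ hA.ne']
  calc |exp x - A| = A * |exp (x - log A) - 1| := by
        rw [hexp, ← mul_sub_one, abs_mul, abs_of_pos hA]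
    _ ≤ A * (2 * |x - log A|) := by gcongr; exact abs_exp_sub_one_le (by linarith)
    _ < A * ε := by gcongr; linarith

theorem mul_log_div_sub_two_mul_bounds {N y : ℝ} (hN : 0 < N) (hy : 2 * y < N) :
    2 * y ≤ N * log (N / (N - 2 * y)) ∧
      N * log (N / (N - 2 * y)) ≤ 2 * y + 4 * y ^ 2 / (N - 2 * y) := by
  have hd : 0 < N - 2 * y := by linarith
  have hB : 0 < N / (N - 2 * y) := div_pos hN hd
  constructor
  · calc 2 * y = N * (1 - (N / (N - 2 * y))⁻¹) := by field_simp; ring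
      _ ≤ N * log (N / (N - 2 * y)) := by gcongr; exact one_sub_inv_le_log_of_pos hB
  · calc N * log (N / (N - 2 * y)) ≤ N * (N / (N - 2 * y) - 1) := by
          gcongr; exact log_le_sub_one_of_pos hB
      _ = 2 * y + 4 * y ^ 2 / (N - 2 * y) := by field_simp; ring

theorem abs_mul_log_div_sub_two_mul_le {N y h : ℝ} (hN : 2 < N) (hy : |y| ≤ 1) (hh : 0 ≤ h) :
    |N * h * log (N / (N - 2 * y)) - 2 * h * y| ≤ 4 * h / (N - 2) := by
  obtain ⟨hy₁, hy₂⟩ := abs_le.1 hy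
  obtain ⟨hlo, hhi⟩ := mul_log_div_sub_two_mul_bounds (by linarith) (by linarith : 2 * y < N)
  have hsq : 4 * y ^ 2 / (N - 2 * y) ≤ 4 / (N - 2) :=
    div_le_div₀ (by norm_num) (by nlinarith) (by linarith) (by linarith)
  rw [show N * h * log (N / (N - 2 * y)) - 2 * h * y
      = h * (N * log (N / (N - 2 * y)) - 2 * y) by ring, abs_mul, abs_of_nonneg hh,
    abs_of_nonneg (by linarith), mul_comm 4 h, mul_div_assoc]
  gcongr
  linarith

theorem pow_lt_pow_of_rpow_div_lt {b N : ℝ} (hb : 0 ≤ b) {t n : ℕ} (hn : n ≠ 0)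
    (h : b ^ ((t : ℝ) / n) < N) : b ^ t < N ^ n := by
  calc b ^ t = (b ^ ((t : ℝ) / n)) ^ n := by
        rw [← rpow_natCast (b ^ _) n, ← rpow_mul hb, div_mul_cancel₀ _ (by exact_mod_cast hn),
          rpow_natCast]
    _ < N ^ n := pow_lt_pow_left₀ h (by positivity) hn

theorem lt_of_mul_sq_lt_pow_three {a b N : ℝ} (hN : 0 ≤ N) (hNa : N ≤ a)
    (h : b * a ^ 2 < N ^ 3) : b < N := by
  by_contra! hb
  nlinarith [mul_le_mul hb (pow_le_pow_left₀ hN hNa 2) (by positivity) (by linarith)]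

theorem Even.le_two_pow_clog_half_succ {N : ℕ} (hN : Even N) :
    N ≤ 2 ^ (Nat.clog 2 (N / 2) + 1) := by
  obtain ⟨r, rfl⟩ := hN
  rw [pow_succ, show (r + r) / 2 = r by omega]
  have := Nat.le_pow_clog one_lt_two r
  omega

theorem two_pow_div_two_pow_le {k r p : ℕ} (h : k + r ≤ p) :
    (2 : ℝ) ^ k / 2 ^ p ≤ 1 / 2 ^ r := by
  rw [div_le_div_iff₀ (by positivity) (by positivity), one_mul, ← pow_add]
  exact pow_le_pow_right₀ one_le_two (by omega)

theorem two_pow_div_sub_two_le {N : ℝ} {a b : ℕ} (h : (2 : ℝ) ^ (a + b + 2) < N) :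
    2 ^ a / (N - 2) ≤ 1 / 2 ^ b := by
  have hab : (1 : ℝ) ≤ 2 ^ a * 2 ^ b := by rw [← pow_add]; exact one_le_pow₀ one_le_two
  have h4 : (2 : ℝ) ^ (a + b + 2) = 4 * (2 ^ a * 2 ^ b) := by ring
  rw [div_le_div_iff₀ (by linarith) (by positivity)]
  linarith

theorem abs_log_riemann_pow_sub_le {N k : ℕ} {y : ℝ} (hk : 1 ≤ k) (hN : 2 < (N : ℝ))
    (hy : |y| ≤ 1) :
    |log ((N / (N - 2 * y)) ^ (N * 2 ^ (k - 1))) - 2 ^ k * y| ≤ 2 ^ (k + 1) / (N - 2) := by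
  have h2k : (2 : ℝ) * 2 ^ (k - 1) = 2 ^ k := by rw [← pow_succ', Nat.sub_add_cancel hk]
  have := abs_mul_log_div_sub_two_mul_le hN hy (by positivity : (0 : ℝ) ≤ 2 ^ (k - 1))
  rw [log_pow]
  push_cast
  rwa [h2k, show (4 : ℝ) * 2 ^ (k - 1) = 2 ^ (k + 1) by rw [pow_succ, ← h2k]; ring] at this

theorem abs_exp_sub_riemann_pow_lt {x y : ℝ} {N k q : ℕ} (hk : 1 ≤ k) (hy : |y| ≤ 1)
    (hx : |x - 2 ^ k * y| < 1 / 2 ^ q / 4) (hN : (2 : ℝ) ^ (q + k + 5) < N) :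
    |exp x - (N / (N - 2 * y)) ^ (N * 2 ^ (k - 1))| <
      |(N / (N - 2 * y)) ^ (N * 2 ^ (k - 1))| * (1 / 2 ^ q) := by
  have hN₂ : (2 : ℝ) < N := (le_self_pow₀ one_le_two (by omega)).trans_lt hN
  have hB : 0 < (N : ℝ) / (N - 2 * y) := div_pos (by linarith) (by linarith [(abs_le.1 hy).2])
  have htrunc : |log ((N / (N - 2 * y)) ^ (N * 2 ^ (k - 1))) - 2 ^ k * y| ≤ 1 / 2 ^ q / 4 := by
    calc _ ≤ (2 : ℝ) ^ (k + 1) / (N - 2) := abs_log_riemann_pow_sub_le hk hN₂ hy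
      _ ≤ 1 / 2 ^ (q + 2) :=
        two_pow_div_sub_two_le (by rwa [show k + 1 + (q + 2) + 2 = q + k + 5 by ring])
      _ = 1 / 2 ^ q / 4 := by rw [pow_add]; ring
  rw [abs_of_pos (pow_pos hB _)]
  refine abs_exp_sub_lt_of_abs_sub_log_lt (pow_pos hB _)
    (((div_le_one (by positivity)).2 (one_le_pow₀ one_le_two)).trans one_le_two) ?_
  calc _ ≤ |x - 2 ^ k * y| + |2 ^ k * y - log ((N / (N - 2 * y)) ^ (N * 2 ^ (k - 1)))| :=
        abs_sub_le _ _ _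
    _ < 1 / 2 ^ q / 2 := by rw [abs_sub_comm (2 ^ k * y)]; linarith

theorem exp_represented_large_general (x : ℝ) (m n : ℤ) (p N k : ℕ)
    (hx : |x - (m : ℝ) / (n : ℝ)| < |(m : ℝ) / (n : ℝ)| * (1 / 2 ^ p))
    (hmn : 1 ≤ (m : ℝ) / (n : ℝ))
    (hk : 1 ≤ k)
    (hksmall : (m : ℝ) / (2 ^ k * (n : ℝ)) < 1)
    (hNeven : Even N)
    (hN : (N : ℝ) > (2 : ℝ) ^ (((p : ℝ) + 11) / 3))
    (hp : 2 * Nat.clog 2 (N / 2) + 2 * k + 3 ≤ p) :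
    |Real.exp x -
        ((N : ℝ) / ((N : ℝ) - 2 * ((m : ℝ) / (2 ^ k * (n : ℝ))))) ^ (N * 2 ^ (k - 1))| <
      |((N : ℝ) / ((N : ℝ) - 2 * ((m : ℝ) / (2 ^ k * (n : ℝ))))) ^ (N * 2 ^ (k - 1))| *
        (1 / 2 ^ (p - 2 * Nat.clog 2 (N / 2) - 2 * k - 3)) := by
  set c := Nat.clog 2 (N / 2)
  set q := p - 2 * c - 2 * k - 3
  set y : ℝ := m / (2 ^ k * n) with hy
  have hmy : (m : ℝ) / n = 2 ^ k * y := by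
    rw [hy, mul_div_assoc', mul_div_mul_left _ _ (by positivity)]
  have hy₀ : 0 < y := pos_of_mul_pos_right (hmy ▸ one_pos.trans_le hmn) (by positivity)
  have hNq : (2 : ℝ) ^ (q + 2 * k + 12) < N := by
    refine lt_of_mul_sq_lt_pow_three (a := 2 ^ (c + 1)) (by positivity)
      (by exact_mod_cast hNeven.le_two_pow_clog_half_succ) ?_
    rw [← pow_mul, ← pow_add, show q + 2 * k + 12 + (c + 1) * 2 = p + 11 by omega]
    exact pow_lt_pow_of_rpow_div_lt zero_le_two three_ne_zero (by push_cast; exact hN)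
  have hinput : |x - 2 ^ k * y| < 1 / 2 ^ q / 4 := by
    calc |x - 2 ^ k * y| < 2 ^ k * y * (1 / 2 ^ p) := by
          rwa [hmy, abs_of_pos (by positivity : (0 : ℝ) < 2 ^ k * y)] at hx
      _ ≤ 2 ^ k / 2 ^ p := by
          rw [mul_one_div]; gcongr; exact mul_le_of_le_one_right (by positivity) hksmall.le
      _ ≤ 1 / 2 ^ (q + 2) := two_pow_div_two_pow_le (by omega)
      _ = 1 / 2 ^ q / 4 := by rw [pow_add]; ring
  exact abs_exp_sub_riemann_pow_lt hk (abs_le.2 ⟨by linarith, hksmall.le⟩) hinput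
    ((pow_le_pow_right₀ one_le_two (by omega)).trans_lt hNq)

/-- Range-reduced Riemann-sum approximation of `exp x` for `m/n ≥ 1`:
if `x` is represented by `(m, n, p)`, `k ≥ 1` with `m / (2 ^ k * n) < 1`,
`N` is even with `N > 2 ^ ((p + 11) / 3)` (real power), and
`p ≥ 2 ⌈log₂ (N / 2)⌉ + 2 k + 3`, then
`A = (N / (N - 2 m / (2 ^ k * n))) ^ (N * 2 ^ (k - 1))` approximates `exp x`
with relative error less than `1 / 2 ^ (p - 2 ⌈log₂ (N / 2)⌉ - 2 k - 3)`. -/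
theorem exp_represented_large (x : ℝ) (m n : ℤ) (p N k : ℕ)
    (hm : m ≠ 0) (hn : n ≠ 0)
    (hx : |x - (m : ℝ) / (n : ℝ)| < |(m : ℝ) / (n : ℝ)| * (1 / 2 ^ p))
    (hmn : 1 ≤ (m : ℝ) / (n : ℝ))
    (hk : 1 ≤ k)
    (hksmall : (m : ℝ) / (2 ^ k * (n : ℝ)) < 1)
    (hNeven : Even N)
    (hN : (N : ℝ) > (2 : ℝ) ^ (((p : ℝ) + 11) / 3))
    (hp : 2 * Nat.clog 2 (N / 2) + 2 * k + 3 ≤ p) :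
    |Real.exp x -
        ((N : ℝ) / ((N : ℝ) - 2 * ((m : ℝ) / (2 ^ k * (n : ℝ))))) ^ (N * 2 ^ (k - 1))| <
      |((N : ℝ) / ((N : ℝ) - 2 * ((m : ℝ) / (2 ^ k * (n : ℝ))))) ^ (N * 2 ^ (k - 1))| *
        (1 / 2 ^ (p - 2 * Nat.clog 2 (N / 2) - 2 * k - 3)) :=
  exp_represented_large_general x m n p N k hx hmn hk hksmall hNeven hN hp
end

section
/- Let x be a real number represented by (m,n,p) with p ≥ 1 and m/n > 1. Let N = ⌈2^(p-2) · (m/n)² / (m/n - 1)⌉, let j be a natural number with 2^j ≥ (1 + n/m)/(1 - n/m), and assume p ≥ j + 4. Define the Riemann sum S = ((m/n - 1)/N) · Σ_{i=0}^{N-1} 1/(1 + (i/N)·(m/n - 1)). Then ln(x) is approximated by S with relative error less than 1/2^(p-j-4); that is, |ln(x) - S| < |S| * (1/2^(p-j-4)). -/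
/-!
Write `y = m/n`, `h = (y - 1)/N` and `T = 1 - 1/y ∈ (0, 1)`. The sum `S` is the left Riemann sum of
the decreasing function `t ↦ 1/t` on `[1, y]` with mesh `h`, so `log y ≤ S ≤ log y + h T`, and the
choice of `N` gives `h T ≤ 4 T³/2^p < 4/2^p`. As `x` is within relative distance `2^(-p)` of `y`,
`|log x - log y| < 2/2^p`. The total error `6/2^p` is less than `S/2^(p-j-4) ≥ 16 · 2^j T/2^p`,
because `S ≥ log y ≥ T` and the choice of `j` gives `2^j T > 1`.
-/

open Real Finset

namespace Real

lemma log_sub_log_le_sub_div {u v : ℝ} (hu : 0 < u) (hv : 0 < v) :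
    log v - log u ≤ (v - u) / u := by
  have := log_le_sub_one_of_pos (div_pos hv hu)
  rwa [log_div hv.ne' hu.ne', div_sub_one hu.ne'] at this

lemma sub_div_le_log_sub_log {u v : ℝ} (hu : 0 < u) (hv : 0 < v) :
    (v - u) / v ≤ log v - log u := by
  have := log_sub_log_le_sub_div hv hu
  have e : (v - u) / v = -((u - v) / v) := by ring
  linarith

lemma abs_log_sub_log_lt {x y ε : ℝ} (hy : 0 < y) (hε : ε ≤ 1 / 2) (hx : |x - y| < y * ε) :
    |log x - log y| < 2 * ε := by
  obtain ⟨hxl, hxu⟩ := abs_lt.1 hx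
  have hε0 : 0 < ε := pos_of_mul_pos_right ((abs_nonneg _).trans_lt hx) hy.le
  have hyx : y ≤ 2 * x := by nlinarith
  have hx0 : 0 < x := by linarith
  have hup : (x - y) / y < 2 * ε := by rw [div_lt_iff₀ hy]; nlinarith
  have hlo : (y - x) / x < 2 * ε := by rw [div_lt_iff₀ hx0]; nlinarith
  rw [abs_lt]
  constructor
  · linarith [log_sub_log_le_sub_div hx0 hy]
  · linarith [log_sub_log_le_sub_div hy hx0]

end Real

section RiemannSum

variable {a h : ℝ}

lemma add_succ_mul_sub_add_mul (i : ℕ) : a + (i + 1 : ℕ) * h - (a + i * h) = h := by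
  push_cast; ring

lemma sum_range_log_succ_sub_log (N : ℕ) :
    ∑ i ∈ range N, (log (a + (i + 1 : ℕ) * h) - log (a + i * h)) = log (a + N * h) - log a := by
  rw [sum_range_sub fun i : ℕ => log (a + i * h)]
  simp

lemma log_sub_log_le_sum_div (ha : 0 < a) (hh : 0 ≤ h) (N : ℕ) :
    log (a + N * h) - log a ≤ ∑ i ∈ range N, h / (a + i * h) := by
  rw [← sum_range_log_succ_sub_log]
  refine sum_le_sum fun i _ => ?_
  have := log_sub_log_le_sub_div (by positivity : 0 < a + i * h)
    (by positivity : 0 < a + (i + 1 : ℕ) * h)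
  rwa [add_succ_mul_sub_add_mul] at this

lemma sum_div_le_log_sub_log_add (ha : 0 < a) (hh : 0 ≤ h) (N : ℕ) :
    ∑ i ∈ range N, h / (a + i * h) ≤ log (a + N * h) - log a + (h / a - h / (a + N * h)) := by
  have hshift : ∑ i ∈ range N, h / (a + (i + 1 : ℕ) * h) ≤ log (a + N * h) - log a := by
    rw [← sum_range_log_succ_sub_log]
    refine sum_le_sum fun i _ => ?_
    have := sub_div_le_log_sub_log (by positivity : 0 < a + i * h)
      (by positivity : 0 < a + (i + 1 : ℕ) * h)
    rwa [add_succ_mul_sub_add_mul] at this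
  have htel := sum_range_sub' (fun i : ℕ => h / (a + i * h)) N
  simp only [Nat.cast_zero, zero_mul, add_zero, sum_sub_distrib] at htel
  linarith

end RiemannSum

/-- The Riemann sum `S` of the statement, approximating `log y = ∫₁ʸ dt/t`. -/
noncomputable def riemannSumInv (y : ℝ) (N : ℕ) : ℝ :=
  (y - 1) / N * ∑ i ∈ range N, 1 / (1 + (i : ℝ) / N * (y - 1))

section riemannSumInv

variable {y : ℝ} {N : ℕ}

lemma riemannSumInv_eq_sum (y : ℝ) (N : ℕ) :
    riemannSumInv y N = ∑ i ∈ range N, (y - 1) / N / (1 + i * ((y - 1) / N)) := by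
  rw [riemannSumInv, mul_sum]
  refine sum_congr rfl fun i _ => ?_
  ring

lemma log_le_riemannSumInv (hy : 1 ≤ y) (hN : N ≠ 0) : log y ≤ riemannSumInv y N := by
  have := log_sub_log_le_sum_div one_pos (div_nonneg (sub_nonneg.2 hy) N.cast_nonneg) N
  rwa [mul_div_cancel₀ _ (Nat.cast_ne_zero.2 hN), add_sub_cancel, log_one, sub_zero,
    ← riemannSumInv_eq_sum] at this

lemma riemannSumInv_sub_log_le (hy : 1 ≤ y) (hN : N ≠ 0) :
    riemannSumInv y N - log y ≤ (y - 1) / N * (1 - y⁻¹) := by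
  have := sum_div_le_log_sub_log_add one_pos (div_nonneg (sub_nonneg.2 hy) N.cast_nonneg) N
  rw [mul_div_cancel₀ _ (Nat.cast_ne_zero.2 hN), add_sub_cancel, log_one, sub_zero,
    ← riemannSumInv_eq_sum, div_one, div_eq_mul_inv _ y, ← mul_one_sub] at this
  linarith

end riemannSumInv

lemma div_mul_one_sub_inv_le {y N : ℝ} {p : ℕ} (hy : 1 < y) (hp : 2 ≤ p)
    (hN : 2 ^ (p - 2) * y ^ 2 / (y - 1) ≤ N) :
    (y - 1) / N * (1 - y⁻¹) ≤ 4 * (1 - y⁻¹) ^ 3 / 2 ^ p := by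
  have hy1 : 0 < y - 1 := sub_pos.2 hy
  have h2p : (2 : ℝ) ^ p = 4 * 2 ^ (p - 2) := by
    rw [show (4 : ℝ) = 2 ^ 2 by norm_num, ← pow_add]; congr 1; omega
  have hT : 1 - y⁻¹ = (y - 1) / y := by field_simp
  calc (y - 1) / N * (1 - y⁻¹) ≤ (y - 1) / (2 ^ (p - 2) * y ^ 2 / (y - 1)) * (1 - y⁻¹) := by
        gcongr
        rw [hT]; positivity
    _ = 4 * (1 - y⁻¹) ^ 3 / 2 ^ p := by
        rw [hT, h2p]; field_simp

lemma riemannSumInv_sub_log_lt {y : ℝ} {p N : ℕ} (hy : 1 < y) (hp : 2 ≤ p)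
    (hN : 2 ^ (p - 2) * y ^ 2 / (y - 1) ≤ N) :
    riemannSumInv y N - log y < 4 / 2 ^ p := by
  have hy1 : 0 < y - 1 := sub_pos.2 hy
  have hN0 : N ≠ 0 := Nat.cast_ne_zero.1 (lt_of_lt_of_le (by positivity) hN).ne'
  have hT0 : 0 ≤ 1 - y⁻¹ := sub_nonneg.2 (inv_le_one_of_one_le₀ hy.le)
  have hT3 : (1 - y⁻¹) ^ 3 < 1 :=
    pow_lt_one₀ hT0 (by linarith [inv_pos.2 (zero_lt_one.trans hy)]) three_ne_zero
  calc riemannSumInv y N - log y ≤ 4 * (1 - y⁻¹) ^ 3 / 2 ^ p :=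
        (riemannSumInv_sub_log_le hy.le hN0).trans (div_mul_one_sub_inv_le hy hp hN)
    _ < 4 / 2 ^ p := by gcongr; linarith

lemma one_lt_mul_one_sub_of_div_le {t c : ℝ} (ht0 : 0 < t) (ht1 : t < 1)
    (hc : (1 + t) / (1 - t) ≤ c) : 1 < c * (1 - t) := by
  have := (div_le_iff₀ (sub_pos.2 ht1)).1 hc
  linarith

theorem log_represented_gt_one_general (x : ℝ) (m n : ℤ) (p j N : ℕ)
    (hx : |x - (m : ℝ) / (n : ℝ)| < |(m : ℝ) / (n : ℝ)| * (1 / 2 ^ p))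
    (hmn : 1 < (m : ℝ) / (n : ℝ))
    (hN : N = ⌈(2 : ℝ) ^ (p - 2) * ((m : ℝ) / (n : ℝ)) ^ 2 / ((m : ℝ) / (n : ℝ) - 1)⌉₊)
    (hj : (2 : ℝ) ^ j ≥ (1 + (n : ℝ) / (m : ℝ)) / (1 - (n : ℝ) / (m : ℝ)))
    (hpj : j + 4 ≤ p) :
    |Real.log x -
        ((m : ℝ) / (n : ℝ) - 1) / N *
          ∑ i ∈ Finset.range N, 1 / (1 + (i : ℝ) / N * ((m : ℝ) / (n : ℝ) - 1))| <
      |((m : ℝ) / (n : ℝ) - 1) / N *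
          ∑ i ∈ Finset.range N, 1 / (1 + (i : ℝ) / N * ((m : ℝ) / (n : ℝ) - 1))| *
        (1 / 2 ^ (p - j - 4)) := by
  rw [← inv_div (m : ℝ) n] at hj
  set y := (m : ℝ) / n
  have hy0 : 0 < y := by linarith
  have hT0 : 0 < 1 - y⁻¹ := sub_pos.2 (inv_lt_one_of_one_lt₀ hmn)
  have hNy : 2 ^ (p - 2) * y ^ 2 / (y - 1) ≤ (N : ℝ) := hN ▸ Nat.le_ceil _
  have hN0 : N ≠ 0 := hN ▸ (Nat.ceil_pos.2 (by have := sub_pos.2 hmn; positivity)).ne'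
  change |log x - riemannSumInv y N| < |riemannSumInv y N| * _
  set S := riemannSumInv y N
  have hlogx : |log x - log y| < 2 / 2 ^ p := by
    rw [abs_of_pos hy0] at hx
    rw [← mul_one_div]
    exact abs_log_sub_log_lt hy0 (by gcongr; exact le_self_pow₀ one_le_two (by omega)) hx
  have hSlo : log y ≤ S := log_le_riemannSumInv hmn.le hN0
  have hShi : S - log y < 4 / 2 ^ p := riemannSumInv_sub_log_lt hmn (by omega) hNy
  have hjT : 1 < 2 ^ j * (1 - y⁻¹) :=
    one_lt_mul_one_sub_of_div_le (inv_pos.2 hy0) (inv_lt_one_of_one_lt₀ hmn) hj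
  have hTS : 1 - y⁻¹ ≤ S := (one_sub_inv_le_log_of_pos hy0).trans hSlo
  have hscale : 1 / (2 : ℝ) ^ (p - j - 4) = 2 ^ j * 16 / 2 ^ p := by
    rw [Nat.sub_sub, pow_sub₀ _ two_ne_zero hpj, pow_add]
    field_simp
    norm_num
  rw [abs_of_nonneg (hT0.le.trans hTS), hscale]
  calc |log x - S| ≤ |log x - log y| + |log y - S| := abs_sub_le _ _ _
    _ < 16 * 1 / 2 ^ p := by
        rw [abs_sub_comm (log y), abs_of_nonneg (sub_nonneg.2 hSlo)]
        have : 2 / 2 ^ p + 4 / 2 ^ p < 16 * 1 / (2 : ℝ) ^ p := by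
          rw [← add_div]; gcongr; norm_num
        linarith
    _ < 16 * (2 ^ j * (1 - y⁻¹)) / 2 ^ p := by gcongr
    _ ≤ 16 * (2 ^ j * S) / 2 ^ p := by gcongr
    _ = S * (2 ^ j * 16 / 2 ^ p) := by ring

/-- Riemann-sum approximation of `ln x` for `m/n > 1`: if `x` is represented by
`(m, n, p)` with `p ≥ 1`, `N = ⌈2 ^ (p - 2) * (m/n) ^ 2 / (m/n - 1)⌉`, `j` satisfies
`2 ^ j ≥ (1 + n/m) / (1 - n/m)`, and `p ≥ j + 4`, then the Riemann sum
`S = ((m/n - 1) / N) * ∑_{i=0}^{N-1} 1 / (1 + (i / N) * (m/n - 1))` approximates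
`ln x` with relative error less than `1 / 2 ^ (p - j - 4)`. -/
theorem log_represented_gt_one (x : ℝ) (m n : ℤ) (p j N : ℕ)
    (hm : m ≠ 0) (hn : n ≠ 0) (hp : 1 ≤ p)
    (hx : |x - (m : ℝ) / (n : ℝ)| < |(m : ℝ) / (n : ℝ)| * (1 / 2 ^ p))
    (hmn : 1 < (m : ℝ) / (n : ℝ))
    (hN : N = ⌈(2 : ℝ) ^ (p - 2) * ((m : ℝ) / (n : ℝ)) ^ 2 / ((m : ℝ) / (n : ℝ) - 1)⌉₊)
    (hj : (2 : ℝ) ^ j ≥ (1 + (n : ℝ) / (m : ℝ)) / (1 - (n : ℝ) / (m : ℝ)))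
    (hpj : j + 4 ≤ p) :
    |Real.log x -
        ((m : ℝ) / (n : ℝ) - 1) / N *
          ∑ i ∈ Finset.range N, 1 / (1 + (i : ℝ) / N * ((m : ℝ) / (n : ℝ) - 1))| <
      |((m : ℝ) / (n : ℝ) - 1) / N *
          ∑ i ∈ Finset.range N, 1 / (1 + (i : ℝ) / N * ((m : ℝ) / (n : ℝ) - 1))| *
        (1 / 2 ^ (p - j - 4)) :=
  log_represented_gt_one_general x m n p j N hx hmn hN hj hpj
end

section
/- Let x be a real number represented by (m,n,p) with p ≥ 6. Let N = 2^(p-2) · ⌈(m/n)²⌉ and define the Riemann sum S = ((m/n)/N) · Σ_{i=0}^{N-1} 1/(1 + ((i/N)·(m/n))²). Then arctan(x) is approximated by S with relative error less than 1/2^(p-6); that is, |arctan(x) - S| < |S| * (1/2^(p-6)). -/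
/-!
Write `q = m / n`. Since `arctan` is odd and `1 / (1 + t ^ 2)` is even, we may assume `q > 0`.
The sum `S` is then the left Riemann sum, with `N` steps, of the decreasing function
`1 / (1 + t ^ 2)` on `[0, q]`, whose integral is `arctan q`. Comparing each step with the
integral gives `arctan q ≤ S ≤ arctan q + (q / N) * q ^ 2 / (1 + q ^ 2)`, and
`N ≥ 2 ^ (p - 2) q ^ 2` makes this error at most `4 q / ((1 + q ^ 2) 2 ^ p)`. Since `x` lies
within `q / 4` of `q`, where `1 / (1 + t ^ 2) ≤ 2 / (1 + q ^ 2)`, also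
`|arctan x - arctan q| < 2 q / ((1 + q ^ 2) 2 ^ p)`. The total error
`6 q / ((1 + q ^ 2) 2 ^ p)` is below `S / 2 ^ (p - 6)` because `S ≥ q / (1 + q ^ 2)`.
-/

open Real Finset intervalIntegral

noncomputable def leftRiemannSum (f : ℝ → ℝ) (b : ℝ) (N : ℕ) : ℝ :=
  b / N * ∑ i ∈ range N, f (i / N * b)

section

variable {f : ℝ → ℝ} {b : ℝ} {N : ℕ}

lemma leftRiemannSum_neg_of_even (hf : ∀ t, f (-t) = f t) :
    leftRiemannSum f (-b) N = -leftRiemannSum f b N := by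
  simp only [leftRiemannSum, mul_neg, hf, neg_div, neg_mul]

lemma leftRiemannSum_eq_mul_sum_comp_mul (f : ℝ → ℝ) (b : ℝ) (N : ℕ) :
    leftRiemannSum f b N = b / N * ∑ i ∈ range N, f (b / N * i) := by
  simp only [leftRiemannSum, div_mul_comm]

lemma integral_eq_mul_integral_comp_mul (hN : N ≠ 0) :
    ∫ t in 0..b, f t = b / N * ∫ u in 0..(N : ℝ), f (b / N * u) := by
  rw [← smul_eq_mul, smul_integral_comp_mul_left, mul_zero,
    div_mul_cancel₀ _ (Nat.cast_ne_zero.2 hN)]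

lemma AntitoneOn.comp_mul_of_nonneg (hf : AntitoneOn f (Set.Icc 0 b)) (hb : 0 ≤ b) :
    AntitoneOn (fun u => f (b / N * u)) (Set.Icc 0 N) := by
  have hc : 0 ≤ b / N := by positivity
  have hmaps : Set.MapsTo (b / N * ·) (Set.Icc 0 N) (Set.Icc 0 b) := fun u ⟨hu0, huN⟩ =>
    ⟨by positivity, by
      show b / N * u ≤ b
      rw [div_mul_comm]
      exact mul_le_of_le_one_left hb (div_le_one_of_le₀ huN N.cast_nonneg)⟩
  exact hf.comp_MonotoneOn ((monotone_mul_left_of_nonneg hc).monotoneOn _) hmaps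

lemma AntitoneOn.integral_le_leftRiemannSum (hf : AntitoneOn f (Set.Icc 0 b)) (hb : 0 ≤ b)
    (hN : N ≠ 0) : ∫ t in 0..b, f t ≤ leftRiemannSum f b N := by
  have hg : AntitoneOn (fun u => f (b / N * u)) (Set.Icc 0 (0 + N)) := by
    simpa only [zero_add] using hf.comp_mul_of_nonneg hb
  rw [integral_eq_mul_integral_comp_mul hN, leftRiemannSum_eq_mul_sum_comp_mul]
  gcongr
  simpa only [zero_add] using hg.integral_le_sum

lemma AntitoneOn.leftRiemannSum_le_integral_add (hf : AntitoneOn f (Set.Icc 0 b)) (hb : 0 ≤ b)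
    (hN : N ≠ 0) : leftRiemannSum f b N ≤ (∫ t in 0..b, f t) + b / N * (f 0 - f b) := by
  have hg : AntitoneOn (fun u => f (b / N * u)) (Set.Icc 0 (0 + N)) := by
    simpa only [zero_add] using hf.comp_mul_of_nonneg hb
  have hshift :
      ∑ i ∈ range N, f (b / N * ↑(i + 1)) = ∑ i ∈ range N, f (b / N * i) - f 0 + f b := by
    have h1 := sum_range_succ' (fun i : ℕ => f (b / N * i)) N
    have h2 := sum_range_succ (fun i : ℕ => f (b / N * i)) N
    rw [div_mul_cancel₀ _ (Nat.cast_ne_zero.2 hN)] at h2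
    simp only [Nat.cast_zero, mul_zero] at h1
    linarith
  have hsum :
      ∑ i ∈ range N, f (b / N * i) - f 0 + f b ≤ ∫ u in 0..(N : ℝ), f (b / N * u) := by
    simpa only [zero_add, hshift] using hg.sum_le_integral
  rw [integral_eq_mul_integral_comp_mul hN, leftRiemannSum_eq_mul_sum_comp_mul]
  calc b / N * ∑ i ∈ range N, f (b / N * i)
      = b / N * (∑ i ∈ range N, f (b / N * i) - f 0 + f b) + b / N * (f 0 - f b) := by ring
    _ ≤ b / N * (∫ u in 0..(N : ℝ), f (b / N * u)) + b / N * (f 0 - f b) := by gcongr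

lemma AntitoneOn.mul_le_leftRiemannSum (hf : AntitoneOn f (Set.Icc 0 b)) (hb : 0 ≤ b)
    (hN : N ≠ 0) : b * f b ≤ leftRiemannSum f b N := by
  have hterm : ∀ i ∈ range N, f b ≤ f (i / N * b) := fun i hi => by
    have hiN : (i : ℝ) / N ≤ 1 :=
      div_le_one_of_le₀ (by exact_mod_cast (mem_range.1 hi).le) N.cast_nonneg
    have hib : (i : ℝ) / N * b ≤ b := mul_le_of_le_one_left hb hiN
    exact hf ⟨by positivity, hib⟩ ⟨hb, le_rfl⟩ hib
  calc b * f b = b / N * ∑ _i ∈ range N, f b := by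
        rw [sum_const, card_range, nsmul_eq_mul]; field_simp
    _ ≤ leftRiemannSum f b N := by
        unfold leftRiemannSum; gcongr with i hi; exact hterm i hi

end

lemma antitoneOn_one_div_one_add_sq : AntitoneOn (fun t : ℝ => 1 / (1 + t ^ 2)) (Set.Ici 0) :=
  fun u hu _ _ huv => by dsimp only; gcongr

section

variable {b : ℝ} {N : ℕ}

lemma arctan_le_leftRiemannSum (hb : 0 ≤ b) (hN : N ≠ 0) :
    arctan b ≤ leftRiemannSum (fun t => 1 / (1 + t ^ 2)) b N := by
  simpa [integral_one_div_one_add_sq] using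
    (antitoneOn_one_div_one_add_sq.mono Set.Icc_subset_Ici_self).integral_le_leftRiemannSum hb hN

lemma leftRiemannSum_le_arctan_add (hb : 0 ≤ b) (hN : N ≠ 0) :
    leftRiemannSum (fun t => 1 / (1 + t ^ 2)) b N ≤ arctan b + b / N * (b ^ 2 / (1 + b ^ 2)) := by
  have h := (antitoneOn_one_div_one_add_sq.mono
    Set.Icc_subset_Ici_self).leftRiemannSum_le_integral_add hb hN
  rw [integral_one_div_one_add_sq, arctan_zero, sub_zero] at h
  convert h using 3
  field_simp
  ring

lemma abs_arctan_sub_leftRiemannSum_le (hb : 0 ≤ b) (hN : N ≠ 0) :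
    |arctan b - leftRiemannSum (fun t => 1 / (1 + t ^ 2)) b N| ≤
      b / N * (b ^ 2 / (1 + b ^ 2)) := by
  have hlow := arctan_le_leftRiemannSum hb hN
  have hup := leftRiemannSum_le_arctan_add hb hN
  rw [abs_sub_comm, abs_of_nonneg (by linarith)]
  linarith

end

lemma abs_arctan_sub_le {x q : ℝ} (h : |x - q| ≤ q / 4) :
    |arctan x - arctan q| ≤ 2 / (1 + q ^ 2) * |x - q| := by
  rw [← integral_one_div_one_add_sq, ← Real.norm_eq_abs]
  refine norm_integral_le_of_norm_le_const fun t ht => ?_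
  have htq := Set.abs_sub_left_of_mem_uIcc (Set.uIoc_subset_uIcc ht)
  have hq : 0 ≤ q := by linarith [abs_nonneg (x - q)]
  have ht : 3 * q / 4 ≤ t := by linarith [neg_abs_le (t - q)]
  have hsq : (3 * q / 4) ^ 2 ≤ t ^ 2 := pow_le_pow_left₀ (by positivity) ht 2
  rw [Real.norm_eq_abs, abs_of_pos (by positivity),
    div_le_div_iff₀ (by positivity) (by positivity)]
  nlinarith

lemma abs_arctan_sub_leftRiemannSum_lt {x q : ℝ} {p N : ℕ} (hq : 0 < q) (hp : 6 ≤ p)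
    (hx : |x - q| < q * (1 / 2 ^ p)) (hN : N = 2 ^ (p - 2) * ⌈q ^ 2⌉₊) :
    |arctan x - leftRiemannSum (fun t => 1 / (1 + t ^ 2)) q N| <
      |leftRiemannSum (fun t => 1 / (1 + t ^ 2)) q N| * (1 / 2 ^ (p - 6)) := by
  set S := leftRiemannSum (fun t => 1 / (1 + t ^ 2)) q N
  have hN0 : N ≠ 0 := by
    rw [hN]; exact mul_ne_zero (by positivity) (Nat.ceil_pos.2 (by positivity)).ne'
  have hNge : 2 ^ (p - 2) * q ^ 2 ≤ (N : ℝ) := by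
    rw [hN]; push_cast; gcongr; exact Nat.le_ceil _
  have hpow2 : (2 : ℝ) ^ p = 2 ^ (p - 2) * 4 := by
    rw [← pow_sub_mul_pow (2 : ℝ) (by omega : 2 ≤ p)]; norm_num
  have hpow6 : (2 : ℝ) ^ p = 2 ^ (p - 6) * 64 := by
    rw [← pow_sub_mul_pow (2 : ℝ) hp]; norm_num
  have hS : q / (1 + q ^ 2) ≤ S := by
    simpa only [mul_one_div] using (antitoneOn_one_div_one_add_sq.mono
      Set.Icc_subset_Ici_self).mul_le_leftRiemannSum hq.le hN0
  have hxq : |x - q| ≤ q / 4 := by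
    refine hx.le.trans ?_
    rw [mul_one_div, hpow2]
    gcongr
    exact le_mul_of_one_le_left (by norm_num) (one_le_pow₀ (by norm_num))
  have hvary : |arctan x - arctan q| < 2 * q / ((1 + q ^ 2) * 2 ^ p) := by
    calc |arctan x - arctan q| ≤ 2 / (1 + q ^ 2) * |x - q| := abs_arctan_sub_le hxq
      _ < 2 / (1 + q ^ 2) * (q * (1 / 2 ^ p)) := by gcongr
      _ = 2 * q / ((1 + q ^ 2) * 2 ^ p) := by field_simp
  have hriemann : |arctan q - S| ≤ 4 * q / ((1 + q ^ 2) * 2 ^ p) := by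
    refine (abs_arctan_sub_leftRiemannSum_le hq.le hN0).trans ?_
    rw [hpow2, div_mul_div_comm, div_le_div_iff₀ (by positivity) (by positivity)]
    calc q * q ^ 2 * ((1 + q ^ 2) * (2 ^ (p - 2) * 4))
        = 4 * q * ((2 ^ (p - 2) * q ^ 2) * (1 + q ^ 2)) := by ring
      _ ≤ 4 * q * (N * (1 + q ^ 2)) := by gcongr
  calc |arctan x - S| ≤ |arctan x - arctan q| + |arctan q - S| := abs_sub_le _ _ _
    _ < 2 * q / ((1 + q ^ 2) * 2 ^ p) + 4 * q / ((1 + q ^ 2) * 2 ^ p) :=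
        add_lt_add_of_lt_of_le hvary hriemann
    _ ≤ 64 * q / ((1 + q ^ 2) * 2 ^ p) := by
        rw [← add_div]; gcongr; linarith
    _ = q / (1 + q ^ 2) * (1 / 2 ^ (p - 6)) := by rw [hpow6]; field_simp
    _ ≤ |S| * (1 / 2 ^ (p - 6)) := by gcongr; exact hS.trans (le_abs_self S)

theorem arctan_represented_general (x : ℝ) (m n : ℤ) (p N : ℕ)
    (hp : 6 ≤ p)
    (hx : |x - (m : ℝ) / (n : ℝ)| < |(m : ℝ) / (n : ℝ)| * (1 / 2 ^ p))
    (hN : N = 2 ^ (p - 2) * ⌈((m : ℝ) / (n : ℝ)) ^ 2⌉₊) :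
    |Real.arctan x -
        (m : ℝ) / (n : ℝ) / N *
          ∑ i ∈ Finset.range N, 1 / (1 + ((i : ℝ) / N * ((m : ℝ) / (n : ℝ))) ^ 2)| <
      |(m : ℝ) / (n : ℝ) / N *
          ∑ i ∈ Finset.range N, 1 / (1 + ((i : ℝ) / N * ((m : ℝ) / (n : ℝ))) ^ 2)| *
        (1 / 2 ^ (p - 6)) := by
  set q : ℝ := (m : ℝ) / (n : ℝ)
  change |arctan x - leftRiemannSum (fun t => 1 / (1 + t ^ 2)) q N| <
    |leftRiemannSum (fun t => 1 / (1 + t ^ 2)) q N| * (1 / 2 ^ (p - 6))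
  have hq : q ≠ 0 := by
    intro hq
    simp only [hq, abs_zero, zero_mul] at hx
    exact (abs_nonneg _).not_gt hx
  rcases hq.lt_or_gt with hneg | hpos
  · have h := abs_arctan_sub_leftRiemannSum_lt (x := -x) (N := N) (neg_pos.2 hneg) hp
      (by rwa [neg_sub_neg, abs_sub_comm, ← abs_of_neg hneg]) (by rwa [neg_sq])
    rwa [leftRiemannSum_neg_of_even (fun t => by rw [neg_sq]), arctan_neg, ← neg_add',
      abs_neg, abs_neg, ← sub_eq_add_neg] at h
  · exact abs_arctan_sub_leftRiemannSum_lt hpos hp (by rwa [abs_of_pos hpos] at hx) hN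

/-- Riemann-sum approximation of `arctan x`: if `x` is represented by `(m, n, p)` with
`p ≥ 6` and `N = 2 ^ (p - 2) * ⌈(m/n) ^ 2⌉`, then the Riemann sum
`S = ((m/n) / N) * ∑_{i=0}^{N-1} 1 / (1 + ((i / N) * (m/n)) ^ 2)` approximates
`arctan x` with relative error less than `1 / 2 ^ (p - 6)`. -/
theorem arctan_represented (x : ℝ) (m n : ℤ) (p N : ℕ)
    (hm : m ≠ 0) (hn : n ≠ 0) (hp : 6 ≤ p)
    (hx : |x - (m : ℝ) / (n : ℝ)| < |(m : ℝ) / (n : ℝ)| * (1 / 2 ^ p))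
    (hN : N = 2 ^ (p - 2) * ⌈((m : ℝ) / (n : ℝ)) ^ 2⌉₊) :
    |Real.arctan x -
        (m : ℝ) / (n : ℝ) / N *
          ∑ i ∈ Finset.range N, 1 / (1 + ((i : ℝ) / N * ((m : ℝ) / (n : ℝ))) ^ 2)| <
      |(m : ℝ) / (n : ℝ) / N *
          ∑ i ∈ Finset.range N, 1 / (1 + ((i : ℝ) / N * ((m : ℝ) / (n : ℝ))) ^ 2)| *
        (1 / 2 ^ (p - 6)) :=
  arctan_represented_general x m n p N hp hx hN
end

section
/- Let x be a real number represented by (m,n,p) with -1 < m/n < 1. Let N be an odd natural number satisfying (5/6) · (2N+2)! · (2N-1)² / 2^(2N) > 2^p, and assume p ≥ 2⌈log₂(2N-1)⌉ + 3. Define the Taylor polynomial S = Σ_{i=0}^{N} (-1)^i · (m/n)^(2i+1) / (2i+1)!. Then sin(x) is approximated by S with relative error less than 1/2^(p - 2⌈log₂(2N-1)⌉ - 3); that is, |sin(x) - S| < |S| * (1/2^(p - 2⌈log₂(2N-1)⌉ - 3)). -/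
/-!
Write `y = m / n`, so `|y| ≤ 1`. There the terms of the sine series decrease at least by a
factor `6`, so the Taylor remainder is at most `(6/5) |y|^(2N+3) / (2N+3)!`; the factor `5/6`
in the hypothesis on `N` absorbs this `6/5` and bounds the remainder by `η |y|` with
`η = 2^(2⌈log₂(2N-1)⌉) / 2^p`. Since `sin` is 1-Lipschitz, also `|sin x - sin y| < η |y|`.
Jordan's inequality `|sin y| ≥ (2/π) |y|` keeps the Taylor sum `S` away from zero,
`|S| ≥ |y| / 4`, so the total error `2 η |y|` is at most
`8 η |S| = |S| / 2^(p - 2⌈log₂(2N-1)⌉ - 3)`.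
-/

open Real Finset Nat

theorem Nat.six_pow_mul_factorial_le_factorial_add_two_mul {a : ℕ} (ha : 2 ≤ a) (k : ℕ) :
    6 ^ k * a ! ≤ (a + 2 * k)! :=
  calc 6 ^ k * a ! ≤ ((a + 1) ^ 2) ^ k * a ! := by
        gcongr; nlinarith
    _ = a ! * (a + 1) ^ (2 * k) := by rw [pow_mul, mul_comm]
    _ ≤ (a + 2 * k)! := Nat.factorial_mul_pow_le_factorial

theorem Real.abs_sin_sub_sum_range_le {y : ℝ} (hy : |y| ≤ 1) (N : ℕ) :
    |sin y - ∑ i ∈ range (N + 1), (-1) ^ i * y ^ (2 * i + 1) / ((2 * i + 1)! : ℝ)| ≤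
      6 / 5 * (|y| ^ (2 * N + 3) / ((2 * N + 3)! : ℝ)) := by
  set f : ℕ → ℝ := fun i => (-1) ^ i * y ^ (2 * i + 1) / ((2 * i + 1)! : ℝ)
  set C := |y| ^ (2 * N + 3) / ((2 * N + 3)! : ℝ)
  have htail : sin y - ∑ i ∈ range (N + 1), f i = ∑' k, f (k + (N + 1)) := by
    rw [← (hasSum_sin y).tsum_eq, ← (hasSum_sin y).summable.sum_add_tsum_nat_add (N + 1),
      add_sub_cancel_left]
  have hgeom : HasSum (fun k : ℕ => C * (1 / 6) ^ k) (6 / 5 * C) := by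
    have := (hasSum_geometric_of_lt_one (r := (1 / 6 : ℝ)) (by norm_num) (by norm_num)).mul_left C
    rwa [show C * (1 - 1 / 6)⁻¹ = 6 / 5 * C by norm_num; ring] at this
  have hterm (k : ℕ) : ‖f (k + (N + 1))‖ ≤ C * (1 / 6) ^ k := by
    have hexp : 2 * (k + (N + 1)) + 1 = 2 * N + 3 + 2 * k := by ring
    have hfact : (6 : ℝ) ^ k * (2 * N + 3)! ≤ (2 * N + 3 + 2 * k)! := by
      exact_mod_cast Nat.six_pow_mul_factorial_le_factorial_add_two_mul (by omega) k
    simp only [f, C, norm_div, norm_mul, norm_pow, norm_neg, norm_one, one_pow, one_mul,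
      Real.norm_eq_abs, Nat.abs_cast, hexp]
    rw [div_le_iff₀ (by positivity)]
    calc |y| ^ (2 * N + 3 + 2 * k) ≤ |y| ^ (2 * N + 3) :=
          pow_le_pow_of_le_one (abs_nonneg y) hy (by omega)
      _ = |y| ^ (2 * N + 3) / (2 * N + 3)! * (1 / 6) ^ k * (6 ^ k * (2 * N + 3)!) := by
          rw [one_div, inv_pow, mul_assoc, inv_mul_cancel_left₀ (by positivity),
            div_mul_cancel₀ _ (by positivity)]
      _ ≤ |y| ^ (2 * N + 3) / (2 * N + 3)! * (1 / 6) ^ k * (2 * N + 3 + 2 * k)! := by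
          gcongr
  rw [htail]
  exact tsum_of_norm_bounded hgeom hterm

theorem sq_two_mul_sub_one_le_four_pow_clog (N : ℕ) :
    (2 * (N : ℝ) - 1) ^ 2 ≤ 2 ^ (2 * Nat.clog 2 (2 * N - 1)) := by
  rcases N with _ | N
  · norm_num
  · have hle : ((2 * (N + 1) - 1 : ℕ) : ℝ) ≤ 2 ^ Nat.clog 2 (2 * (N + 1) - 1) := by
      exact_mod_cast Nat.le_pow_clog one_lt_two _
    have hcast : ((2 * (N + 1) - 1 : ℕ) : ℝ) = 2 * ((N + 1 : ℕ) : ℝ) - 1 := by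
      rw [Nat.cast_sub (by omega)]
      push_cast
      ring
    rw [pow_mul', ← hcast]
    gcongr

theorem six_div_five_div_factorial_le_of_two_pow_lt {N p : ℕ}
    (hN : (2 : ℝ) ^ p < 5 / 6 * (2 * N + 2)! * (2 * (N : ℝ) - 1) ^ 2 / 2 ^ (2 * N)) :
    6 / 5 / ((2 * N + 3)! : ℝ) ≤ 2 ^ (2 * Nat.clog 2 (2 * N - 1)) / 2 ^ p := by
  have hF : ((2 * N + 2)! : ℝ) ≤ (2 * N + 3)! := by exact_mod_cast Nat.factorial_le (by omega)
  have h4N : (1 : ℝ) ≤ 2 ^ (2 * N) := one_le_pow₀ one_le_two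
  rw [div_le_div_iff₀ (by positivity) (by positivity)]
  calc 6 / 5 * (2 : ℝ) ^ p
      ≤ 6 / 5 * (5 / 6 * (2 * N + 2)! * (2 * (N : ℝ) - 1) ^ 2 / 2 ^ (2 * N)) := by gcongr
    _ ≤ (2 * N + 2)! * (2 * (N : ℝ) - 1) ^ 2 := by
        rw [← mul_div_assoc, ← mul_assoc, ← mul_assoc,
          show (6 : ℝ) / 5 * (5 / 6) = 1 by norm_num, one_mul]
        exact div_le_self (by positivity) h4N
    _ ≤ 2 ^ (2 * Nat.clog 2 (2 * N - 1)) * (2 * N + 3)! := by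
        rw [mul_comm]
        gcongr
        exact sq_two_mul_sub_one_le_four_pow_clog N

theorem Real.abs_sin_sub_lt_of_abs_sub_lt {x y S η : ℝ} (hy : |y| ≤ 1) (hη : η ≤ 1 / 8)
    (hx : |x - y| < η * |y|) (hS : |sin y - S| ≤ η * |y|) :
    |sin x - S| < |S| * (8 * η) := by
  have hη₀ : 0 < η := pos_of_mul_pos_left ((abs_nonneg _).trans_lt hx) (abs_nonneg y)
  have hsin : |y| / 2 ≤ |sin y| := by
    have hjordan := mul_abs_le_abs_sin (hy.trans (by linarith [pi_gt_three]))
    have : 1 / 2 ≤ 2 / π := by rw [div_le_div_iff₀ (by norm_num) pi_pos]; linarith [pi_le_four]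
    nlinarith [abs_nonneg y]
  have hS_lower : |y| / 4 ≤ |S| := by
    have := abs_sub_abs_le_abs_sub (sin y) S
    nlinarith [abs_nonneg y]
  calc |sin x - S| ≤ |sin x - sin y| + |sin y - S| := abs_sub_le _ _ _
    _ < η * |y| + η * |y| := add_lt_add_of_lt_of_le ((abs_sin_sub_sin_le x y).trans_lt hx) hS
    _ ≤ |S| * (8 * η) := by nlinarith

theorem sin_represented_base_general (x : ℝ) (m n : ℤ) (p N : ℕ)
    (hx : |x - (m : ℝ) / (n : ℝ)| < |(m : ℝ) / (n : ℝ)| * (1 / 2 ^ p))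
    (hmn₀ : -1 < (m : ℝ) / (n : ℝ)) (hmn₁ : (m : ℝ) / (n : ℝ) < 1)
    (hN : (5 : ℝ) / 6 * (Nat.factorial (2 * N + 2)) * (2 * (N : ℝ) - 1) ^ 2 / 2 ^ (2 * N)
        > 2 ^ p)
    (hp : 2 * Nat.clog 2 (2 * N - 1) + 3 ≤ p) :
    |Real.sin x -
        ∑ i ∈ Finset.range (N + 1),
          (-1 : ℝ) ^ i * ((m : ℝ) / (n : ℝ)) ^ (2 * i + 1) / (Nat.factorial (2 * i + 1))| <
      |∑ i ∈ Finset.range (N + 1),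
          (-1 : ℝ) ^ i * ((m : ℝ) / (n : ℝ)) ^ (2 * i + 1) / (Nat.factorial (2 * i + 1))| *
        (1 / 2 ^ (p - 2 * Nat.clog 2 (2 * N - 1) - 3)) := by
  set y : ℝ := (m : ℝ) / (n : ℝ)
  set c := Nat.clog 2 (2 * N - 1)
  set η : ℝ := 2 ^ (2 * c) / 2 ^ p
  have hy : |y| ≤ 1 := abs_le.2 ⟨hmn₀.le, hmn₁.le⟩
  have hη : 8 * η = 1 / 2 ^ (p - 2 * c - 3) := by
    obtain ⟨q, rfl⟩ := Nat.exists_eq_add_of_le hp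
    rw [show 2 * c + 3 + q - 2 * c - 3 = q by omega]
    simp only [η, pow_add]
    field_simp
    norm_num
  have htail : |sin y - ∑ i ∈ range (N + 1), (-1) ^ i * y ^ (2 * i + 1) / ((2 * i + 1)! : ℝ)|
      ≤ η * |y| := by
    calc _ ≤ 6 / 5 * (|y| ^ (2 * N + 3) / ((2 * N + 3)! : ℝ)) := abs_sin_sub_sum_range_le hy N
      _ ≤ 6 / 5 * (|y| / ((2 * N + 3)! : ℝ)) := by
          gcongr
          exact pow_le_of_le_one (abs_nonneg y) hy (by omega)
      _ = 6 / 5 / ((2 * N + 3)! : ℝ) * |y| := by ring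
      _ ≤ η * |y| := by gcongr; exact six_div_five_div_factorial_le_of_two_pow_lt hN
  have hxy : |x - y| < η * |y| := by
    have h : 1 / 2 ^ p ≤ η :=
      div_le_div_of_nonneg_right (one_le_pow₀ (by norm_num)) (by positivity)
    exact hx.trans_le (by rw [mul_comm]; gcongr)
  have hη_le : η ≤ 1 / 8 := by
    have : 1 / 2 ^ (p - 2 * c - 3) ≤ (1 : ℝ) :=
      div_le_one_of_le₀ (one_le_pow₀ (by norm_num)) (by positivity)
    linarith
  rw [← hη]
  exact abs_sin_sub_lt_of_abs_sub_lt hy hη_le hxy htail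

/-- Taylor approximation of `sin x` in the base interval: if `x` is represented by
`(m, n, p)` with `-1 < m/n < 1`, `N` is odd with
`(5/6) * (2N+2)! * (2N-1)^2 / 2^(2N) > 2^p`, and `p ≥ 2 ⌈log₂ (2N-1)⌉ + 3`, then the
Taylor polynomial `S = ∑_{i=0}^{N} (-1)^i (m/n)^(2i+1) / (2i+1)!` approximates
`sin x` with relative error less than `1 / 2 ^ (p - 2 ⌈log₂ (2N-1)⌉ - 3)`. -/
theorem sin_represented_base (x : ℝ) (m n : ℤ) (p N : ℕ)
    (hm : m ≠ 0) (hn : n ≠ 0)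
    (hx : |x - (m : ℝ) / (n : ℝ)| < |(m : ℝ) / (n : ℝ)| * (1 / 2 ^ p))
    (hmn₀ : -1 < (m : ℝ) / (n : ℝ)) (hmn₁ : (m : ℝ) / (n : ℝ) < 1)
    (hNodd : Odd N)
    (hN : (5 : ℝ) / 6 * (Nat.factorial (2 * N + 2)) * (2 * (N : ℝ) - 1) ^ 2 / 2 ^ (2 * N)
        > 2 ^ p)
    (hp : 2 * Nat.clog 2 (2 * N - 1) + 3 ≤ p) :
    |Real.sin x -
        ∑ i ∈ Finset.range (N + 1),
          (-1 : ℝ) ^ i * ((m : ℝ) / (n : ℝ)) ^ (2 * i + 1) / (Nat.factorial (2 * i + 1))| <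
      |∑ i ∈ Finset.range (N + 1),
          (-1 : ℝ) ^ i * ((m : ℝ) / (n : ℝ)) ^ (2 * i + 1) / (Nat.factorial (2 * i + 1))| *
        (1 / 2 ^ (p - 2 * Nat.clog 2 (2 * N - 1) - 3)) :=
  sin_represented_base_general x m n p N hx hmn₀ hmn₁ hN hp
end

section
/- Let x be a real number represented by (m,n,p) with -1 < m/n < 1. Let N be an odd natural number satisfying (2N+1)! · (2N-2)² / 2^(2N) > 2^p, and assume p ≥ 2⌈log₂(2N-2)⌉ + 3. Define the Taylor polynomial S = Σ_{i=0}^{N} (-1)^i · (m/n)^(2i) / (2i)!. Then cos(x) is approximated by S with relative error less than 1/2^(p - 2⌈log₂(2N-2)⌉ - 3); that is, |cos(x) - S| < |S| * (1/2^(p - 2⌈log₂(2N-2)⌉ - 3)). -/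
/-!
Write `r = m/n`. Since `cos` is 1-Lipschitz, `|cos x - cos r| ≤ |x - r| < 2⁻ᵖ`. Since `|r| ≤ 1`,
the term of index `N + 1 + i` of the cosine series is at most `2⁻ⁱ / (2N+2)!`, so the
truncation error `|cos r - S|` is at most `2 / (2N+2)!`, which the hypothesis on `N` makes smaller
than `(2N-2)² / 2ᵖ ≤ 4^⌈log₂ (2N-2)⌉ / 2ᵖ`. The total error is thus below
`2 · 4^⌈log₂ (2N-2)⌉ / 2ᵖ`, which is less than `S / 2^(p - 2⌈log₂ (2N-2)⌉ - 3)` since `S > 1/4`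
(as `cos r ≥ 1 - r²/2 ≥ 1/2` and the truncation error is at most `2/4!`).
-/

open Real Finset Nat

theorem abs_cos_sub_taylor_le {r : ℝ} (hr : |r| ≤ 1) (N : ℕ) :
    |cos r - ∑ i ∈ range (N + 1), (-1) ^ i * r ^ (2 * i) / (2 * i)!| ≤ 2 / (2 * N + 2)! := by
  refine ((hasSum_nat_add_iff' (N + 1)).2 (hasSum_cos r)).norm_le_of_bounded
    (hasSum_geometric_two' _) fun i => ?_
  have hfac : ((2 * N + 2)! * 2 ^ i : ℝ) ≤ (2 * (i + (N + 1)))! := by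
    calc ((2 * N + 2)! * 2 ^ i : ℝ) ≤ (2 * N + 2)! * (2 * N + 2 + 1 : ℕ) ^ i := by
          gcongr; push_cast; linarith
      _ ≤ (2 * N + 2 + i)! := by exact_mod_cast factorial_mul_pow_le_factorial
      _ ≤ (2 * (i + (N + 1)))! := by gcongr; omega
  rw [norm_div, norm_mul, norm_pow, norm_pow, norm_neg, norm_one, one_pow, one_mul,
    Real.norm_natCast]
  calc ‖r‖ ^ (2 * (i + (N + 1))) / (2 * (i + (N + 1)))!
      ≤ 1 / ((2 * N + 2)! * 2 ^ i) :=
        div_le_div₀ zero_le_one (pow_le_one₀ (norm_nonneg r) hr) (by positivity) hfac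
    _ = 2 / (2 * N + 2)! / 2 / 2 ^ i := by field_simp

theorem quarter_lt_cos_taylor {r : ℝ} (hr : |r| ≤ 1) {N : ℕ} (hN : 1 ≤ N) :
    1 / 4 < ∑ i ∈ range (N + 1), (-1) ^ i * r ^ (2 * i) / (2 * i)! := by
  have hcos : 1 / 2 ≤ cos r := by
    nlinarith [one_sub_sq_div_two_le_cos (x := r), sq_le_one_iff_abs_le_one r |>.2 hr]
  have hfac : (24 : ℝ) ≤ (2 * N + 2)! := by
    exact_mod_cast (factorial_le (by omega : 4 ≤ 2 * N + 2) : (4)! ≤ _)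
  have htail := abs_le.1 (abs_cos_sub_taylor_le hr N)
  have : 2 / ((2 * N + 2)! : ℝ) ≤ 2 / 24 := by gcongr
  linarith [htail.2]

theorem two_div_factorial_lt {N : ℕ} {A B : ℝ} (hB : 0 < B)
    (h : B < (2 * N + 1)! * A / 2 ^ (2 * N)) : 2 / ((2 * N + 2)! : ℝ) < A / B := by
  rw [lt_div_iff₀ (by positivity)] at h
  rw [div_lt_div_iff₀ (by positivity) hB, factorial_succ (2 * N + 1)]
  have hpow : (1 : ℝ) ≤ 2 ^ (2 * N) := one_le_pow₀ one_le_two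
  have hFA : B < (2 * N + 1)! * A := by nlinarith
  push_cast
  nlinarith [(N.cast_nonneg : (0 : ℝ) ≤ N)]

theorem cos_represented_base_general (x : ℝ) (m n : ℤ) (p N : ℕ)
    (hx : |x - (m : ℝ) / (n : ℝ)| < |(m : ℝ) / (n : ℝ)| * (1 / 2 ^ p))
    (hmn₀ : -1 < (m : ℝ) / (n : ℝ)) (hmn₁ : (m : ℝ) / (n : ℝ) < 1)
    (hNodd : Odd N)
    (hN : (Nat.factorial (2 * N + 1) : ℝ) * (2 * (N : ℝ) - 2) ^ 2 / 2 ^ (2 * N) > 2 ^ p)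
    (hp : 2 * Nat.clog 2 (2 * N - 2) + 3 ≤ p) :
    |Real.cos x -
        ∑ i ∈ Finset.range (N + 1),
          (-1 : ℝ) ^ i * ((m : ℝ) / (n : ℝ)) ^ (2 * i) / (Nat.factorial (2 * i))| <
      |∑ i ∈ Finset.range (N + 1),
          (-1 : ℝ) ^ i * ((m : ℝ) / (n : ℝ)) ^ (2 * i) / (Nat.factorial (2 * i))| *
        (1 / 2 ^ (p - 2 * Nat.clog 2 (2 * N - 2) - 3)) := by
  set r : ℝ := m / n
  set S := ∑ i ∈ range (N + 1), (-1 : ℝ) ^ i * r ^ (2 * i) / (2 * i)!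
  set c := clog 2 (2 * N - 2)
  have hr : |r| ≤ 1 := (abs_lt.2 ⟨hmn₀, hmn₁⟩).le
  have hS : 1 / 4 < S := quarter_lt_cos_taylor hr hNodd.pos
  have hxr : |cos x - cos r| < 1 / 2 ^ p := calc
    |cos x - cos r| ≤ |x - r| := abs_cos_sub_cos_le x r
    _ < |r| * (1 / 2 ^ p) := hx
    _ ≤ 1 / 2 ^ p := mul_le_of_le_one_left (by positivity) hr
  have htail : |cos r - S| < (2 * N - 2) ^ 2 / 2 ^ p :=
    (abs_cos_sub_taylor_le hr N).trans_lt (two_div_factorial_lt (by positivity) hN)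
  have hclog : (2 * N - 2 : ℝ) ^ 2 ≤ (2 ^ c) ^ 2 := by
    have hcast : ((2 * N - 2 : ℕ) : ℝ) = 2 * N - 2 := by
      rw [Nat.cast_sub (by linarith [hNodd.pos])]; push_cast; ring
    rw [← hcast]
    gcongr
    exact_mod_cast Nat.le_pow_clog one_lt_two (2 * N - 2)
  have hscale : (1 : ℝ) / 2 ^ (p - 2 * c - 3) = 2 ^ (2 * c + 3) / 2 ^ p := by
    rw [Nat.sub_sub, pow_sub₀ _ two_ne_zero hp]; field_simp
  have hone : (1 : ℝ) ≤ (2 ^ c) ^ 2 := one_le_pow₀ (one_le_pow₀ one_le_two)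
  rw [abs_of_pos (show 0 < S by linarith), hscale]
  calc |cos x - S| ≤ |cos x - cos r| + |cos r - S| := abs_sub_le _ _ _
    _ < 1 / 2 ^ p + (2 * N - 2) ^ 2 / 2 ^ p := add_lt_add hxr htail
    _ ≤ 2 * (2 ^ c) ^ 2 / 2 ^ p := by rw [← add_div]; gcongr; linarith
    _ < S * (2 ^ (2 * c + 3) / 2 ^ p) := by
      rw [mul_div_assoc', show (2 : ℝ) ^ (2 * c + 3) = 8 * (2 ^ c) ^ 2 by ring]
      gcongr ?_ / _
      nlinarith

/-- Taylor approximation of `cos x` in the base interval: if `x` is represented by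
`(m, n, p)` with `-1 < m/n < 1`, `N` is odd with
`(2N+1)! * (2N-2)^2 / 2^(2N) > 2^p`, and `p ≥ 2 ⌈log₂ (2N-2)⌉ + 3`, then the Taylor
polynomial `S = ∑_{i=0}^{N} (-1)^i (m/n)^(2i) / (2i)!` approximates `cos x` with
relative error less than `1 / 2 ^ (p - 2 ⌈log₂ (2N-2)⌉ - 3)`. -/
theorem cos_represented_base (x : ℝ) (m n : ℤ) (p N : ℕ)
    (hm : m ≠ 0) (hn : n ≠ 0)
    (hx : |x - (m : ℝ) / (n : ℝ)| < |(m : ℝ) / (n : ℝ)| * (1 / 2 ^ p))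
    (hmn₀ : -1 < (m : ℝ) / (n : ℝ)) (hmn₁ : (m : ℝ) / (n : ℝ) < 1)
    (hNodd : Odd N)
    (hN : (Nat.factorial (2 * N + 1) : ℝ) * (2 * (N : ℝ) - 2) ^ 2 / 2 ^ (2 * N) > 2 ^ p)
    (hp : 2 * Nat.clog 2 (2 * N - 2) + 3 ≤ p) :
    |Real.cos x -
        ∑ i ∈ Finset.range (N + 1),
          (-1 : ℝ) ^ i * ((m : ℝ) / (n : ℝ)) ^ (2 * i) / (Nat.factorial (2 * i))| <
      |∑ i ∈ Finset.range (N + 1),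
          (-1 : ℝ) ^ i * ((m : ℝ) / (n : ℝ)) ^ (2 * i) / (Nat.factorial (2 * i))| *
        (1 / 2 ^ (p - 2 * Nat.clog 2 (2 * N - 2) - 3)) :=
  cos_represented_base_general x m n p N hx hmn₀ hmn₁ hNodd hN hp
end

section
/- Let x be a real number represented by (m,n,p), and let i ≥ 1 be a natural number with p ≥ 2⌈log₂ i⌉. Then x^i is represented by (m^i, n^i, p - 2⌈log₂ i⌉); that is, |x^i - (m/n)^i| < |(m/n)^i| * (1/2^(p - 2⌈log₂ i⌉)). -/
/-!
Write `x = a (1 + e)` with `|e| < 2⁻ᵖ`. Multiplying two such approximations multiplies the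
relative errors as `(1 + e)(1 + e') = 1 + (e + e' + e e')`, which costs at most two bits of
precision. Splitting the exponent `i ≤ 2 ^ k` into two halves `⌈i/2⌉ + ⌊i/2⌋` and recursing gives a
product tree of depth `k = ⌈log₂ i⌉`, hence a loss of at most `2 k` bits.
-/

variable {𝕜 : Type*} [NormedDivisionRing 𝕜]

/-- `x` is represented by `q` to relative precision `2⁻ᵖ`; the paper's triple `(m, n, p)` is the
case `q = m / n`. -/
def Represents (x q : 𝕜) (p : ℕ) : Prop :=
  ‖x - q‖ < ‖q‖ * (1 / 2 ^ p)

theorem represents_self_of_ne_zero {q : 𝕜} (hq : q ≠ 0) (p : ℕ) : Represents q q p := by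
  unfold Represents
  rw [sub_self, norm_zero]
  exact mul_pos (norm_pos_iff.mpr hq) (by positivity)

theorem Represents.norm_pos {x q : 𝕜} {p : ℕ} (h : Represents x q p) : 0 < ‖q‖ :=
  pos_of_mul_pos_left ((norm_nonneg _).trans_lt h) (by positivity)

theorem Represents.mul {x y a b : 𝕜} {p : ℕ} (hx : Represents x a (p + 2))
    (hy : Represents y b (p + 2)) : Represents (x * y) (a * b) p := by
  have ha := hx.norm_pos
  have hb := hy.norm_pos
  unfold Represents at *
  set ε : ℝ := 1 / 2 ^ (p + 2)
  have h4ε : 1 / 2 ^ p = 4 * ε := by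
    simp only [ε, pow_add]
    ring
  have hε_le : 4 * ε ≤ 1 := h4ε ▸ div_le_one_of_le₀ (one_le_pow₀ one_le_two) (by positivity)
  have hxy : x * y - a * b = (x - a) * (y - b) + (x - a) * b + a * (y - b) := by noncomm_ring
  have hdx := norm_nonneg (x - a)
  have hdy := norm_nonneg (y - b)
  calc ‖x * y - a * b‖
      ≤ ‖x - a‖ * ‖y - b‖ + ‖x - a‖ * ‖b‖ + ‖a‖ * ‖y - b‖ := by
        rw [hxy]
        refine (norm_add₃_le ..).trans ?_
        gcongr <;> exact norm_mul_le _ _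
    _ < ‖a‖ * ‖b‖ * (2 * ε + ε ^ 2) := by nlinarith [mul_lt_mul_of_pos_left hy ha]
    _ ≤ ‖a * b‖ * (1 / 2 ^ p) := by
        rw [norm_mul, h4ε]
        gcongr
        nlinarith

theorem Represents.pow {x a : 𝕜} {k : ℕ} :
    ∀ {p i : ℕ}, i ≤ 2 ^ k → Represents x a (p + 2 * k) → Represents (x ^ i) (a ^ i) p := by
  induction k with
  | zero =>
    intro p i hi hx
    interval_cases i
    · simpa using represents_self_of_ne_zero one_ne_zero p
    · simpa using hx
  | succ k ih =>
    intro p i hi hx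
    have hx' : Represents x a (p + 2 + 2 * k) := by
      rwa [show p + 2 + 2 * k = p + 2 * (k + 1) by ring]
    have hhalf : i / 2 ≤ 2 ^ k := by omega
    have hhalf' : i - i / 2 ≤ 2 ^ k := by omega
    rw [← Nat.sub_add_cancel (Nat.div_le_self i 2), pow_add, pow_add]
    exact (ih hhalf' hx').mul (ih hhalf hx')

theorem pow_represented_general (x : ℝ) (m n : ℤ) (p i : ℕ)
    (hp : 2 * Nat.clog 2 i ≤ p)
    (hx : |x - (m : ℝ) / (n : ℝ)| < |(m : ℝ) / (n : ℝ)| * (1 / 2 ^ p)) :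
    |x ^ i - ((m : ℝ) / (n : ℝ)) ^ i| <
      |((m : ℝ) / (n : ℝ)) ^ i| * (1 / 2 ^ (p - 2 * Nat.clog 2 i)) := by
  have hx' : Represents x ((m : ℝ) / n) (p - 2 * Nat.clog 2 i + 2 * Nat.clog 2 i) := by
    rwa [Nat.sub_add_cancel hp]
  exact Represents.pow (Nat.le_pow_clog one_lt_two i) hx'

/-- If `x` is represented by `(m, n, p)` and `i ≥ 1` with `p ≥ 2 ⌈log₂ i⌉`, then
`x ^ i` is represented by `(m ^ i, n ^ i, p - 2 ⌈log₂ i⌉)`. -/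
theorem pow_represented (x : ℝ) (m n : ℤ) (p i : ℕ)
    (hm : m ≠ 0) (hn : n ≠ 0) (hi : 1 ≤ i)
    (hp : 2 * Nat.clog 2 i ≤ p)
    (hx : |x - (m : ℝ) / (n : ℝ)| < |(m : ℝ) / (n : ℝ)| * (1 / 2 ^ p)) :
    |x ^ i - ((m : ℝ) / (n : ℝ)) ^ i| <
      |((m : ℝ) / (n : ℝ)) ^ i| * (1 / 2 ^ (p - 2 * Nat.clog 2 i)) :=
  pow_represented_general x m n p i hp hx
end

section
/- For every nonzero real number x, it holds that |x / ((1 + x²) · arctan(x))| < 1. -/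
open Real

/- By the mean value theorem `arctan x / x = 1 / (1 + c ^ 2)` for some `c ∈ (0, x)`,
and this exceeds `1 / (1 + x ^ 2)`. -/
theorem Real.div_one_add_sq_lt_arctan {x : ℝ} (hx : 0 < x) : x / (1 + x ^ 2) < arctan x := by
  obtain ⟨c, ⟨hc₀, hcx⟩, hc⟩ := exists_hasDerivAt_eq_slope arctan (fun t ↦ 1 / (1 + t ^ 2)) hx
    continuous_arctan.continuousOn fun t _ ↦ hasDerivAt_arctan t
  rw [arctan_zero, sub_zero, sub_zero] at hc
  have hslope : 1 / (1 + x ^ 2) < arctan x / x :=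
    hc ▸ one_div_lt_one_div_of_lt (by positivity) (by gcongr)
  calc x / (1 + x ^ 2) = x * (1 / (1 + x ^ 2)) := by ring
    _ < x * (arctan x / x) := by gcongr
    _ = arctan x := mul_div_cancel₀ _ hx.ne'

theorem Real.abs_arctan (x : ℝ) : |arctan x| = arctan |x| := by
  rcases abs_cases x with ⟨hx, hx₀⟩ | ⟨hx, hx₀⟩
  · rw [hx, abs_of_nonneg (arctan_nonneg.mpr hx₀)]
  · rw [hx, arctan_neg, abs_of_neg (arctan_lt_zero.mpr hx₀)]

/-- For every nonzero real `x`, `|x / ((1 + x ^ 2) * arctan x)| < 1`. -/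
theorem abs_div_one_add_sq_mul_arctan_lt_one (x : ℝ) (hx : x ≠ 0) :
    |x / ((1 + x ^ 2) * Real.arctan x)| < 1 := by
  have hpos : 0 < |x| := abs_pos.mpr hx
  have key := div_one_add_sq_lt_arctan hpos
  rw [abs_div, abs_mul, abs_arctan, abs_of_pos (by positivity : (0 : ℝ) < 1 + x ^ 2), ← sq_abs,
    ← div_div, div_lt_one (arctan_pos.mpr hpos)]
  exact key
end
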